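/- arXiv:2202.12560 — 14 statements merged into one kernel-verified Lean document; each statement's English description precedes it below -/
import Mathlib

section
/- If A is a strictly row diagonally dominant Z-matrix with nonnegative diagonal entries (i.e., an invertible M-matrix), then for any proper index subset α, the Schur complement A/A[αᶜ,αᶜ] is again a strictly row diagonally dominant Z-matrix. -/
open Matrix Finset

/-- The submatrix of `A` with rows in `s` and columns in `t`. -/
noncomputable def subm {ι : Type*} [Fintype ι] [DecidableEq ι]
    (A : Matrix ι ι ℝ) (s t : Finset ι) : Matrix s t ℝ :=
  Matrix.of fun i j => A i j

/-- The Schur complement `A/A[αᶜ,αᶜ]`, i.e. the Kron reduction keeping the nodes of `α`. -/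
noncomputable def schur {ι : Type*} [Fintype ι] [DecidableEq ι]
    (A : Matrix ι ι ℝ) (α : Finset ι) : Matrix α α ℝ :=
  subm A α α - subm A α αᶜ * (subm A αᶜ αᶜ)⁻¹ * subm A αᶜ α

/-- A Z-matrix with nonnegative diagonal which is strictly row diagonally dominant has
positive row sums. -/
lemma rowsum_pos_aux {m : Type*} [Fintype m] [DecidableEq m] (D : Matrix m m ℝ)
    (hdiag : ∀ i, 0 ≤ D i i)
    (hdom : ∀ i, ∑ j ∈ Finset.univ.erase i, |D i j| < |D i i|) :
    ∀ i, 0 < ∑ j, D i j := by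
  intro i
  have h1 : ∑ j, D i j = D i i + ∑ j ∈ Finset.univ.erase i, D i j :=
    (Finset.add_sum_erase _ _ (Finset.mem_univ i)).symm
  have h2 : -∑ j ∈ Finset.univ.erase i, D i j ≤ ∑ j ∈ Finset.univ.erase i, |D i j| := by
    rw [← Finset.sum_neg_distrib]
    exact Finset.sum_le_sum fun j _ => neg_le_abs _
  have h3 := lt_of_le_of_lt h2 (hdom i)
  rw [abs_of_nonneg (hdiag i)] at h3
  linarith

/-- Minimum principle: if `D` is a Z-matrix with positive row sums and `D x ≥ 0` then `x ≥ 0`. -/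
lemma nonneg_of_mulVec_nonneg {m : Type*} [Fintype m] [DecidableEq m] (D : Matrix m m ℝ)
    (hZ : ∀ i j, i ≠ j → D i j ≤ 0) (hrow : ∀ i, 0 < ∑ j, D i j)
    (x : m → ℝ) (hb : ∀ i, 0 ≤ ∑ j, D i j * x j) : ∀ i, 0 ≤ x i := by
  by_contra h
  push_neg at h
  obtain ⟨i0, hi0⟩ := h
  obtain ⟨i, -, hmin⟩ := Finset.exists_min_image Finset.univ x ⟨i0, Finset.mem_univ i0⟩
  have hxi : x i < 0 := lt_of_le_of_lt (hmin i0 (Finset.mem_univ _)) hi0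
  have hle : ∑ j, D i j * x j ≤ (∑ j, D i j) * x i := by
    rw [Finset.sum_mul]
    refine Finset.sum_le_sum fun j _ => ?_
    rcases eq_or_ne j i with rfl | hji
    · exact le_refl _
    · exact mul_le_mul_of_nonpos_left (hmin j (Finset.mem_univ _)) (hZ i j hji.symm)
  have : (∑ j, D i j) * x i < 0 := mul_neg_of_pos_of_neg (hrow i) hxi
  exact absurd (hb i) (not_le.mpr (lt_of_le_of_lt hle this))

/-- If `A` is a strictly row diagonally dominant Z-matrix with nonnegative diagonal entries,
then for any proper index subset `α` the Schur complement `A/A[αᶜ,αᶜ]` is again a strictly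
row diagonally dominant Z-matrix. -/
theorem schur_of_sdd_Z_matrix {n : ℕ} (A : Matrix (Fin n) (Fin n) ℝ)
    (hZ : ∀ i j, i ≠ j → A i j ≤ 0) (hdiag : ∀ i, 0 ≤ A i i)
    (hdom : ∀ i, ∑ j ∈ Finset.univ.erase i, |A i j| < |A i i|)
    (α : Finset (Fin n)) (hα : α ≠ Finset.univ) :
    (∀ i j : α, i ≠ j → schur A α i j ≤ 0) ∧
    (∀ i : α, ∑ j ∈ Finset.univ.erase i, |schur A α i j| < |schur A α i i|) := by
  classical
  set D : Matrix (αᶜ : Finset (Fin n)) (αᶜ : Finset (Fin n)) ℝ := subm A αᶜ αᶜ with hD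
  have hDapp : ∀ (k l : (αᶜ : Finset (Fin n))), D k l = A k l := fun k l => rfl
  -- D is a Z-matrix
  have hDZ : ∀ (k l : (αᶜ : Finset (Fin n))), k ≠ l → D k l ≤ 0 := by
    intro k l hkl
    exact hZ k l (fun hc => hkl (Subtype.ext hc))
  have hDdiag : ∀ k : (αᶜ : Finset (Fin n)), 0 ≤ D k k := fun k => hdiag k
  -- D is strictly row diagonally dominant
  have hDdom : ∀ k : (αᶜ : Finset (Fin n)),
      ∑ l ∈ Finset.univ.erase k, |D k l| < |D k k| := by
    intro k
    simp only [hDapp]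
    rw [Finset.sum_erase_eq_sub (Finset.mem_univ k),
      Finset.sum_coe_sort αᶜ (fun l => |A (k : Fin n) l|)]
    have h3 : ∑ l ∈ (αᶜ : Finset (Fin n)), |A (k : Fin n) l|
        = |A (k : Fin n) k| + ∑ l ∈ (αᶜ : Finset (Fin n)).erase (k : Fin n), |A (k : Fin n) l| :=
      (Finset.add_sum_erase _ _ k.2).symm
    have h4 : ∑ l ∈ (αᶜ : Finset (Fin n)).erase (k : Fin n), |A (k : Fin n) l|
        ≤ ∑ l ∈ Finset.univ.erase (k : Fin n), |A (k : Fin n) l| := by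
      refine Finset.sum_le_sum_of_subset_of_nonneg ?_ (fun _ _ _ => abs_nonneg _)
      exact Finset.erase_subset_erase _ (Finset.subset_univ _)
    have h5 := lt_of_le_of_lt h4 (hdom (k : Fin n))
    rw [h3]
    linarith
  -- D has nonzero determinant
  have hdet : D.det ≠ 0 := by
    refine det_ne_zero_of_sum_row_lt_diag ?_
    simpa [Real.norm_eq_abs] using hDdom
  have hinvmul : D⁻¹ * D = 1 := Matrix.nonsing_inv_mul D (isUnit_iff_ne_zero.mpr hdet)
  have hmulinv : D * D⁻¹ = 1 := Matrix.mul_nonsing_inv D (isUnit_iff_ne_zero.mpr hdet)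
  -- D⁻¹ has nonnegative entries
  have hrowD : ∀ k : (αᶜ : Finset (Fin n)), 0 < ∑ l, D k l := rowsum_pos_aux D hDdiag hDdom
  have hinv_nonneg : ∀ (k l : (αᶜ : Finset (Fin n))), 0 ≤ D⁻¹ k l := by
    intro k l
    refine nonneg_of_mulVec_nonneg D hDZ hrowD (fun m => D⁻¹ m l) (fun i => ?_) k
    have : ∑ j, D i j * D⁻¹ j l = (D * D⁻¹) i l := (Matrix.mul_apply).symm
    rw [this, hmulinv]
    by_cases h : i = l <;> simp [Matrix.one_apply, h]
  -- the matrix M = A[α,αᶜ] * D⁻¹ has nonpositive entries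
  set M : Matrix (α : Finset (Fin n)) (αᶜ : Finset (Fin n)) ℝ := subm A α αᶜ * D⁻¹ with hM
  have hne : ∀ (i : α) (k : (αᶜ : Finset (Fin n))), (i : Fin n) ≠ (k : Fin n) := by
    intro i k hc
    have := k.2
    rw [← hc, Finset.mem_compl] at this
    exact this i.2
  have hM_nonpos : ∀ (i : α) (l : (αᶜ : Finset (Fin n))), M i l ≤ 0 := by
    intro i l
    rw [hM, Matrix.mul_apply]
    refine Finset.sum_nonpos fun k _ => ?_
    exact mul_nonpos_of_nonpos_of_nonneg (hZ _ _ (hne i k)) (hinv_nonneg k l)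
  -- expression for the Schur complement in terms of M
  have hSchur : ∀ (i j : α),
      schur A α i j = A i j - ∑ l, M i l * A l j := by
    intro i j
    rw [schur, Matrix.sub_apply, Matrix.mul_assoc, ← Matrix.mul_assoc, ← hM,
      Matrix.mul_apply]
    rfl
  -- Z-matrix property of the Schur complement
  have hB_Z : ∀ i j : α, i ≠ j → schur A α i j ≤ 0 := by
    intro i j hij
    rw [hSchur]
    have h1 : A (i : Fin n) j ≤ 0 := hZ _ _ (fun hc => hij (Subtype.ext hc))
    have h2 : 0 ≤ ∑ l, M i l * A l j := by
      refine Finset.sum_nonneg fun l _ => ?_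
      have := mul_nonneg (neg_nonneg.2 (hM_nonpos i l)) (neg_nonneg.2 (hZ _ _ (hne j l).symm))
      simpa [neg_mul_neg] using this
    linarith
  refine ⟨hB_Z, ?_⟩
  -- positive row sums of A
  have hr : ∀ i, 0 < ∑ j, A i j := rowsum_pos_aux A hdiag hdom
  -- row sums of the Schur complement
  have hrowB : ∀ i : α, ∑ j, A (i : Fin n) j - ∑ l, M i l * (∑ j, A (l : Fin n) j)
      ≤ ∑ j : α, schur A α i j := by
    intro i
    have e1 : ∑ j : α, schur A α i j
        = (∑ j : α, A (i : Fin n) j) - ∑ l, M i l * (∑ j : α, A (l : Fin n) j) := by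
      simp only [hSchur]
      rw [Finset.sum_sub_distrib]
      congr 1
      rw [Finset.sum_comm]
      exact Finset.sum_congr rfl fun l _ => by rw [Finset.mul_sum]
    -- split full row sums
    have e2 : ∀ l : Fin n, (∑ j : α, A l j) = (∑ j, A l j) - ∑ m : (αᶜ : Finset (Fin n)), A l m := by
      intro l
      rw [Finset.sum_coe_sort α (fun j => A l j), Finset.sum_coe_sort αᶜ (fun j => A l j)]
      rw [← Finset.sum_add_sum_compl α (fun j => A l j)]
      ring
    have e3 : ∑ l, M i l * (∑ m : (αᶜ : Finset (Fin n)), A (l : Fin n) m)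
        = ∑ m : (αᶜ : Finset (Fin n)), A (i : Fin n) m := by
      have : ∀ l : (αᶜ : Finset (Fin n)), (∑ m : (αᶜ : Finset (Fin n)), A (l : Fin n) m)
          = ∑ m, D l m := fun l => rfl
      simp only [this]
      have hMD : M * D = subm A α αᶜ := by
        rw [hM, Matrix.mul_assoc, hinvmul, Matrix.mul_one]
      calc ∑ l, M i l * ∑ m, D l m = ∑ m, ∑ l, M i l * D l m := by
            rw [Finset.sum_comm]
            exact Finset.sum_congr rfl fun l _ => Finset.mul_sum _ _ _
        _ = ∑ m, (M * D) i m := Finset.sum_congr rfl fun m _ => (Matrix.mul_apply).symm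
        _ = ∑ m : (αᶜ : Finset (Fin n)), A (i : Fin n) m := by rw [hMD]; rfl
    rw [e1]
    simp only [e2, mul_sub]
    rw [Finset.sum_sub_distrib, e3]
    exact le_of_eq (by ring)
  have hrowB_pos : ∀ i : α, 0 < ∑ j : α, schur A α i j := by
    intro i
    refine lt_of_lt_of_le ?_ (hrowB i)
    have h1 : ∑ l, M i l * (∑ j, A (l : Fin n) j) ≤ 0 :=
      Finset.sum_nonpos fun l _ =>
        mul_nonpos_of_nonpos_of_nonneg (hM_nonpos i l) (le_of_lt (hr l))
    linarith [hr (i : Fin n)]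
  -- conclude strict dominance
  intro i
  have habs : ∑ j ∈ Finset.univ.erase i, |schur A α i j|
      = -∑ j ∈ Finset.univ.erase i, schur A α i j := by
    rw [← Finset.sum_neg_distrib]
    refine Finset.sum_congr rfl fun j hj => ?_
    exact abs_of_nonpos (hB_Z i j (Finset.ne_of_mem_erase hj).symm)
  have hsplit : ∑ j ∈ Finset.univ.erase i, schur A α i j
      = (∑ j : α, schur A α i j) - schur A α i i :=
    Finset.sum_erase_eq_sub (Finset.mem_univ i)
  have hself : schur A α i i ≤ |schur A α i i| := le_abs_self _
  rw [habs, hsplit]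
  have := hrowB_pos i
  linarith
end

section
/- Let Q be a loopy Laplacian matrix (a Z-matrix with nonnegative row sums) of a directed weighted graph, and let α be a reachable subset (every interior node has a path to some boundary node). Then Q[αᶜ,αᶜ] is invertible, so the Kron-reduced matrix Q/Q[αᶜ,αᶜ] is well-defined. -/
open Matrix Finset

/-- The loopy Laplacian `Q = D - A + diag(Aᵢᵢ)` of the graph with adjacency matrix `A`. -/
noncomputable def loopyLap {n : ℕ} (A : Matrix (Fin n) (Fin n) ℝ) : Matrix (Fin n) (Fin n) ℝ :=
  Matrix.of fun i j => if i = j then ∑ k, A i k else -A i j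

/-- The loop-less Laplacian `L = D - A` of the graph with adjacency matrix `A`. -/
noncomputable def looplessLap {n : ℕ} (A : Matrix (Fin n) (Fin n) ℝ) : Matrix (Fin n) (Fin n) ℝ :=
  Matrix.of fun i j => if i = j then (∑ k, A i k) - A i i else -A i j

/-- `α` is a reachable subset: every interior node has a directed path to some boundary node. -/
def ReachableSubset {n : ℕ} (A : Matrix (Fin n) (Fin n) ℝ) (α : Finset (Fin n)) : Prop :=
  ∀ i ∉ α, ∃ j ∈ α, Relation.ReflTransGen (fun u v => 0 < A u v) i j

/-! If `Q[αᶜ,αᶜ] w = 0`, extend `w` by zero to a vector `x` on all nodes. Off `α` we have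
`0 = (Q x)ᵢ = Aᵢᵢ xᵢ + ∑ₖ Aᵢₖ (xᵢ - xₖ)`, so at a positive maximum of `x` every term vanishes and
the maximum value spreads along every edge. Following a path from a maximiser into `α`, where
`x = 0`, gives a contradiction; hence `x ≤ 0`, likewise `-x ≤ 0`, and `w = 0`. -/

theorem extend_val_apply_of_notMem {ι R : Type*} [Zero R] {s : Finset ι} (w : s → R) {k : ι}
    (hk : k ∉ s) : Function.extend Subtype.val w 0 k = 0 :=
  Function.extend_apply' _ _ _ fun ⟨j, hj⟩ => hk (hj ▸ j.2)

theorem subm_mulVec_apply {ι : Type*} [Fintype ι] [DecidableEq ι] (M : Matrix ι ι ℝ)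
    (s : Finset ι) (w : s → ℝ) (i : s) :
    (subm M s s *ᵥ w) i = (M *ᵥ Function.extend Subtype.val w 0) i := by
  have hout : ∀ k ∉ s, M i k * Function.extend Subtype.val w 0 k = 0 := fun k hk => by
    rw [extend_val_apply_of_notMem w hk, mul_zero]
  simp only [mulVec, dotProduct]
  rw [← sum_subset (subset_univ s) fun k _ => hout k, ← sum_coe_sort s]
  simp only [subm, of_apply, Subtype.val_injective.extend_apply]

namespace loopyLap

variable {n : ℕ} {A : Matrix (Fin n) (Fin n) ℝ}

theorem eq_diagonal_sub_add_diagonal (A : Matrix (Fin n) (Fin n) ℝ) :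
    loopyLap A = diagonal (fun i => ∑ k, A i k) - A + diagonal (fun i => A i i) := by
  ext i j
  by_cases h : i = j
  · subst h; simp [loopyLap]
  · simp [loopyLap, h]

theorem mulVec_apply (A : Matrix (Fin n) (Fin n) ℝ) (x : Fin n → ℝ) (i : Fin n) :
    (loopyLap A *ᵥ x) i = A i i * x i + ∑ k, A i k * (x i - x k) := by
  rw [eq_diagonal_sub_add_diagonal, add_mulVec, sub_mulVec]
  simp only [Pi.add_apply, Pi.sub_apply, mulVec_diagonal]
  simp only [mulVec, dotProduct, mul_sub, sum_sub_distrib, ← sum_mul]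
  ring

theorem eq_of_adj_of_forall_le (hA : ∀ i j, 0 ≤ A i j) {x : Fin n → ℝ} {i k : Fin n}
    (hQx : (loopyLap A *ᵥ x) i = 0) (hxi : 0 ≤ x i) (hmax : ∀ j, x j ≤ x i) (hik : 0 < A i k) :
    x k = x i := by
  rw [mulVec_apply] at hQx
  have hterm : ∀ j ∈ univ, 0 ≤ A i j * (x i - x j) :=
    fun j _ => mul_nonneg (hA i j) (sub_nonneg.mpr (hmax j))
  have hsum : ∑ j, A i j * (x i - x j) = 0 :=
    le_antisymm (by nlinarith [hA i i]) (sum_nonneg hterm)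
  have hk := (sum_eq_zero_iff_of_nonneg hterm).mp hsum k (mem_univ k)
  rcases mul_eq_zero.mp hk with h | h
  · exact absurd h hik.ne'
  · linarith

theorem eq_of_reflTransGen (hA : ∀ i j, 0 ≤ A i j) {α : Finset (Fin n)} {x : Fin n → ℝ}
    (hQx : ∀ i ∉ α, (loopyLap A *ᵥ x) i = 0) (hxα : ∀ i ∈ α, x i = 0) {i j : Fin n}
    (hmax : ∀ k, x k ≤ x i) (hpos : 0 < x i)
    (hij : Relation.ReflTransGen (fun u v => 0 < A u v) i j) : x j = x i := by
  induction hij with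
  | refl => rfl
  | @tail b c _ hbc ih =>
    have hb : b ∉ α := fun hb => hpos.ne' (ih ▸ hxα b hb)
    rw [eq_of_adj_of_forall_le hA (hQx b hb) (ih ▸ hpos.le) (ih ▸ hmax) hbc, ih]

theorem nonpos_of_mulVec_eq_zero (hA : ∀ i j, 0 ≤ A i j) {α : Finset (Fin n)}
    (hreach : ReachableSubset A α) {x : Fin n → ℝ}
    (hQx : ∀ i ∉ α, (loopyLap A *ᵥ x) i = 0) (hxα : ∀ i ∈ α, x i = 0) (i : Fin n) :
    x i ≤ 0 := by
  by_contra! hi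
  have : Nonempty (Fin n) := ⟨i⟩
  obtain ⟨i₀, hi₀⟩ := Finite.exists_max x
  have hpos : 0 < x i₀ := hi.trans_le (hi₀ i)
  obtain ⟨j, hj, hpath⟩ := hreach i₀ fun h => hpos.ne' (hxα i₀ h)
  have := eq_of_reflTransGen hA hQx hxα hi₀ hpos hpath
  linarith [hxα j hj]

theorem eq_zero_of_mulVec_eq_zero (hA : ∀ i j, 0 ≤ A i j) {α : Finset (Fin n)}
    (hreach : ReachableSubset A α) {x : Fin n → ℝ}
    (hQx : ∀ i ∉ α, (loopyLap A *ᵥ x) i = 0) (hxα : ∀ i ∈ α, x i = 0) : x = 0 := by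
  have hneg := nonpos_of_mulVec_eq_zero (x := -x) hA hreach
    (fun i hi => by rw [mulVec_neg, Pi.neg_apply, hQx i hi, neg_zero])
    (fun i hi => by rw [Pi.neg_apply, hxα i hi, neg_zero])
  funext i
  have := hneg i
  rw [Pi.neg_apply, neg_nonpos] at this
  exact le_antisymm (nonpos_of_mulVec_eq_zero hA hreach hQx hxα i) this

end loopyLap

/-- If `α` is a reachable subset of the directed weighted graph with adjacency matrix `A`,
then the submatrix `Q[αᶜ,αᶜ]` of the loopy Laplacian is invertible, so the Kron reduction
`Q/Q[αᶜ,αᶜ]` is well-defined. -/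
theorem kron_reduction_well_defined {n : ℕ} (A : Matrix (Fin n) (Fin n) ℝ)
    (hA : ∀ i j, 0 ≤ A i j) (α : Finset (Fin n)) (hreach : ReachableSubset A α) :
    IsUnit (subm (loopyLap A) αᶜ αᶜ).det := by
  rw [isUnit_iff_ne_zero, ne_eq, ← exists_mulVec_eq_zero_iff]
  rintro ⟨w, hw, hQw⟩
  have hx : Function.extend Subtype.val w 0 = 0 := loopyLap.eq_zero_of_mulVec_eq_zero hA hreach
    (fun i hi => by
      rw [← Subtype.coe_mk i (mem_compl.mpr hi), ← subm_mulVec_apply, hQw, Pi.zero_apply])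
    (fun i hi => extend_val_apply_of_notMem w fun h => mem_compl.mp h hi)
  exact hw (funext fun j => by
    rw [← Subtype.val_injective.extend_apply w 0 j, hx, Pi.zero_apply, Pi.zero_apply])
end

section
/- Let L be the loop-less Laplacian of a directed weighted graph and α ⊊ [n]. If α is not a reachable subset, then L[αᶜ,αᶜ] is singular. Combined with the converse, α is a reachable subset if and only if L[αᶜ,αᶜ] is invertible. -/
open Matrix Finset

/-!
Write `M = L[αᶜ,αᶜ]`: its off-diagonal entries are `-A i j ≤ 0`, and its row sum at `i` is the
weight `∑ k ∈ α, A i k` of the edges from `i` into `α`. For a matrix of this sign pattern with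
nonnegative row sums, `det M = 0` exactly when some nonempty set `S` of rows is closed (no nonzero
entry leaves `S`) and has zero row sums. If there is such an `S`, then `M` is block triangular and
its `S`-block kills the all-ones vector. Conversely, if `v` is a kernel vector with a positive entry,
the discrete maximum principle shows that the set where `v` attains its maximum is such an `S`.
For `L[αᶜ,αᶜ]` these sets are exactly the nonempty sets of nodes outside `α` that no edge leaves,
and such a set exists iff some node cannot reach `α`.
-/

namespace Relation

theorem exists_closed_subset_compl_iff {β : Type*} {r : β → β → Prop} {T : Set β} :
    (∃ S : Set β, S.Nonempty ∧ S ⊆ Tᶜ ∧ ∀ i ∈ S, ∀ j, r i j → j ∈ S) ↔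
      ∃ i ∉ T, ∀ j ∈ T, ¬ ReflTransGen r i j := by
  constructor
  · rintro ⟨S, ⟨i, hi⟩, hST, hclosed⟩
    have hstay : ∀ j, ReflTransGen r i j → j ∈ S := fun j hij => by
      induction hij with
      | refl => exact hi
      | tail _ hjk ih => exact hclosed _ ih _ hjk
    exact ⟨i, hST hi, fun j hj hij => hST (hstay j hij) hj⟩
  · rintro ⟨i, hi, hunreached⟩
    exact ⟨{j | ReflTransGen r i j}, ⟨i, .refl⟩, fun j hij hj => hunreached j hj hij,
      fun _ hij _ hjk => hij.tail hjk⟩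

end Relation

namespace Matrix

variable {ι : Type*} [Fintype ι]

theorem det_eq_zero_of_closed_of_sum_eq_zero [DecidableEq ι] {R : Type*} [CommRing R]
    [IsDomain R] {M : Matrix ι ι R} {S : Set ι} (hS : S.Nonempty) (hclosed : ∀ i ∈ S, ∀ j ∉ S, M i j = 0)
    (hsum : ∀ i ∈ S, ∑ j, M i j = 0) : M.det = 0 := by
  classical
  rw [twoBlockTriangular_det' M (· ∈ S) hclosed]
  refine mul_eq_zero_of_left (exists_mulVec_eq_zero_iff.mp ⟨fun _ => 1, ?_, ?_⟩) _
  · obtain ⟨i, hi⟩ := hS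
    exact fun h => one_ne_zero (congrFun h ⟨i, hi⟩)
  · ext ⟨i, hi⟩
    have := hsum i hi
    have hout : ∑ j : {j // j ∉ S}, M i j = 0 :=
      Finset.sum_eq_zero fun j _ => hclosed i hi j.1 j.2
    rw [← Fintype.sum_subtype_add_sum_subtype (· ∈ S), hout, add_zero] at this
    simpa [toSquareBlockProp, mulVec, dotProduct] using this

theorem sum_eq_zero_and_eq_of_mulVec_eq_zero_of_isMax {M : Matrix ι ι ℝ} {v : ι → ℝ} {i : ι}
    (hoff : ∀ i j, i ≠ j → M i j ≤ 0) (hrow : 0 ≤ ∑ j, M i j) (hv : M *ᵥ v = 0)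
    (hmax : ∀ j, v j ≤ v i) (hpos : 0 < v i) :
    ∑ j, M i j = 0 ∧ ∀ j, M i j ≠ 0 → v j = v i := by
  have hterm : ∀ j, 0 ≤ -M i j * (v i - v j) := fun j => by
    rcases eq_or_ne i j with rfl | hij
    · simp
    · exact mul_nonneg (neg_nonneg.mpr (hoff i j hij)) (sub_nonneg.mpr (hmax j))
  have hsplit : (∑ j, M i j) * v i + ∑ j, -M i j * (v i - v j) = 0 := by
    have hrow_i : ∑ j, M i j * v j = 0 := congrFun hv i
    rw [← hrow_i, Finset.sum_mul, ← Finset.sum_add_distrib]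
    exact Finset.sum_congr rfl fun j _ => by ring
  have hrow0 : (∑ j, M i j) * v i = 0 := by
    linarith [mul_nonneg hrow hpos.le, Finset.sum_nonneg fun j (_ : j ∈ Finset.univ) => hterm j]
  refine ⟨(mul_eq_zero.mp hrow0).resolve_right hpos.ne', fun j hj => ?_⟩
  rw [hrow0, zero_add, Finset.sum_eq_zero_iff_of_nonneg fun j _ => hterm j] at hsplit
  have := (mul_eq_zero.mp (hsplit j (Finset.mem_univ j))).resolve_left (neg_ne_zero.mpr hj)
  linarith

theorem exists_closed_of_det_eq_zero [DecidableEq ι] {M : Matrix ι ι ℝ}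
    (hoff : ∀ i j, i ≠ j → M i j ≤ 0) (hrow : ∀ i, 0 ≤ ∑ j, M i j) (hdet : M.det = 0) :
    ∃ S : Set ι, S.Nonempty ∧ (∀ i ∈ S, ∀ j ∉ S, M i j = 0) ∧ ∀ i ∈ S, ∑ j, M i j = 0 := by
  obtain ⟨v, hv0, hv⟩ := exists_mulVec_eq_zero_iff.mpr hdet
  obtain ⟨v, hv, k, hk⟩ : ∃ v : ι → ℝ, M *ᵥ v = 0 ∧ ∃ k, 0 < v k := by
    obtain ⟨k, hk⟩ := Function.ne_iff.mp hv0
    rcases (Ne.lt_or_gt (hk : v k ≠ 0) : v k < 0 ∨ 0 < v k) with hneg | hpos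
    · exact ⟨-v, by rw [mulVec_neg, hv, neg_zero], k, by simpa using hneg⟩
    · exact ⟨v, hv, k, hpos⟩
  obtain ⟨i, -, hi⟩ := Finset.exists_max_image Finset.univ v ⟨k, Finset.mem_univ k⟩
  have hmax : ∀ j, v j ≤ v i := fun j => hi j (Finset.mem_univ j)
  have hprinciple : ∀ i' ∈ {j | v j = v i}, ∑ j, M i' j = 0 ∧ ∀ j, M i' j ≠ 0 → v j = v i' :=
    fun i' (hi' : v i' = v i) => sum_eq_zero_and_eq_of_mulVec_eq_zero_of_isMax hoff (hrow i') hv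
      (fun j => hi' ▸ hmax j) (hi' ▸ (hk.trans_le (hmax k)))
  refine ⟨{j | v j = v i}, ⟨i, rfl⟩, fun i' hi' j hj => ?_, fun i' hi' => (hprinciple i' hi').1⟩
  by_contra hne
  exact hj (((hprinciple i' hi').2 j hne).trans hi')

theorem det_eq_zero_iff_exists_closed [DecidableEq ι] {M : Matrix ι ι ℝ}
    (hoff : ∀ i j, i ≠ j → M i j ≤ 0) (hrow : ∀ i, 0 ≤ ∑ j, M i j) :
    M.det = 0 ↔
      ∃ S : Set ι, S.Nonempty ∧ (∀ i ∈ S, ∀ j ∉ S, M i j = 0) ∧ ∀ i ∈ S, ∑ j, M i j = 0 :=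
  ⟨exists_closed_of_det_eq_zero hoff hrow, fun ⟨_, hS, hclosed, hsum⟩ =>
    det_eq_zero_of_closed_of_sum_eq_zero hS hclosed hsum⟩

end Matrix

section Laplacian

variable {n : ℕ} (A : Matrix (Fin n) (Fin n) ℝ)

theorem looplessLap_apply (i j : Fin n) :
    looplessLap A i j = (if i = j then ∑ k, A i k else 0) - A i j := by
  by_cases h : i = j <;> simp [looplessLap, h]

theorem sum_looplessLap_of_mem {s : Finset (Fin n)} {i : Fin n} (hi : i ∈ s) :
    ∑ j ∈ s, looplessLap A i j = ∑ j ∈ sᶜ, A i j := by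
  simp only [looplessLap_apply, Finset.sum_sub_distrib, Finset.sum_ite_eq, if_pos hi]
  rw [← Finset.sum_add_sum_compl s (A i)]
  ring

theorem sum_subm_looplessLap_compl (α : Finset (Fin n)) (u : ↥αᶜ) :
    ∑ w, subm (looplessLap A) αᶜ αᶜ u w = ∑ k ∈ α, A u k := by
  have hrow := sum_looplessLap_of_mem A u.2
  rw [compl_compl] at hrow
  exact (Finset.sum_coe_sort αᶜ _).trans hrow

theorem subm_looplessLap_apply_of_ne {s t : Finset (Fin n)} {u : ↥s} {w : ↥t}
    (h : (u : Fin n) ≠ w) : subm (looplessLap A) s t u w = -A u w := by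
  simp [subm, looplessLap_apply, h]

variable {A}

theorem closed_subm_looplessLap_iff (hA : ∀ i j, 0 ≤ A i j) {α : Finset (Fin n)}
    (S : Set ↥αᶜ) :
    ((∀ u ∈ S, ∀ w ∉ S, subm (looplessLap A) αᶜ αᶜ u w = 0) ∧
        ∀ u ∈ S, ∑ w, subm (looplessLap A) αᶜ αᶜ u w = 0) ↔
      ∀ i ∈ Subtype.val '' S, ∀ j, 0 < A i j → j ∈ Subtype.val '' S := by
  simp only [sum_subm_looplessLap_compl]
  constructor
  · rintro ⟨hclosed, hsum⟩ _ ⟨u, hu, rfl⟩ j hj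
    have hjα : j ∉ α := fun hjα =>
      hj.ne' ((Finset.sum_eq_zero_iff_of_nonneg fun k _ => hA u k).mp (hsum u hu) j hjα)
    refine ⟨⟨j, Finset.mem_compl.mpr hjα⟩, ?_, rfl⟩
    by_contra hw
    have hne : (u : Fin n) ≠ j := by
      rintro rfl
      exact hw hu
    have := hclosed u hu _ hw
    rw [subm_looplessLap_apply_of_ne A hne, neg_eq_zero] at this
    exact hj.ne' this
  · intro hclosed
    have hzero : ∀ u ∈ S, ∀ j, j ∉ Subtype.val '' S → A u j = 0 := fun u hu j hj =>
      le_antisymm (not_lt.mp fun hpos => hj (hclosed u ⟨u, hu, rfl⟩ j hpos)) (hA u j)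
    refine ⟨fun u hu w hw => ?_, fun u hu => Finset.sum_eq_zero fun k hk => hzero u hu k ?_⟩
    · have hne : (u : Fin n) ≠ w := Subtype.coe_ne_coe.mpr (by rintro rfl; exact hw hu)
      rw [subm_looplessLap_apply_of_ne A hne, hzero u hu w, neg_zero]
      rwa [Subtype.val_injective.mem_set_image]
    · rintro ⟨w, -, rfl⟩
      exact Finset.mem_compl.mp w.2 hk

theorem exists_closed_subm_looplessLap_iff (hA : ∀ i j, 0 ≤ A i j) (α : Finset (Fin n)) :
    (∃ S : Set ↥αᶜ, S.Nonempty ∧ (∀ u ∈ S, ∀ w ∉ S, subm (looplessLap A) αᶜ αᶜ u w = 0) ∧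
        ∀ u ∈ S, ∑ w, subm (looplessLap A) αᶜ αᶜ u w = 0) ↔
      ∃ S : Set (Fin n), S.Nonempty ∧ S ⊆ (↑α)ᶜ ∧ ∀ i ∈ S, ∀ j, 0 < A i j → j ∈ S := by
  constructor
  · rintro ⟨S, hS, hclosed⟩
    refine ⟨Subtype.val '' S, hS.image _, ?_, (closed_subm_looplessLap_iff hA S).mp hclosed⟩
    rintro _ ⟨u, -, rfl⟩
    exact Finset.mem_compl.mp u.2
  · rintro ⟨S, ⟨i, hi⟩, hSα, hclosed⟩
    have himage : Subtype.val '' (Subtype.val ⁻¹' S : Set ↥αᶜ) = S :=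
      Set.image_preimage_eq_of_subset fun j hj => ⟨⟨j, Finset.mem_compl.mpr (hSα hj)⟩, rfl⟩
    refine ⟨Subtype.val ⁻¹' S, ⟨⟨i, Finset.mem_compl.mpr (hSα hi)⟩, hi⟩,
      (closed_subm_looplessLap_iff hA _).mpr (by rwa [himage])⟩

end Laplacian

theorem reachable_iff_submatrix_invertible_general {n : ℕ} (A : Matrix (Fin n) (Fin n) ℝ)
    (hA : ∀ i j, 0 ≤ A i j) (α : Finset (Fin n)) :
    ReachableSubset A α ↔ IsUnit (subm (looplessLap A) αᶜ αᶜ).det := by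
  have hoff : ∀ u w : ↥αᶜ, u ≠ w → subm (looplessLap A) αᶜ αᶜ u w ≤ 0 := fun u w h => by
    rw [subm_looplessLap_apply_of_ne A (Subtype.coe_ne_coe.mpr h), neg_nonpos]
    exact hA u w
  have hrow : ∀ u : ↥αᶜ, 0 ≤ ∑ w, subm (looplessLap A) αᶜ αᶜ u w := fun u => by
    rw [sum_subm_looplessLap_compl]
    exact Finset.sum_nonneg fun k _ => hA u k
  rw [isUnit_iff_ne_zero, ← not_iff_not, not_not, det_eq_zero_iff_exists_closed hoff hrow,
    exists_closed_subm_looplessLap_iff hA, Relation.exists_closed_subset_compl_iff]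
  simp [ReachableSubset]

/-- For the loop-less Laplacian `L` of a directed weighted graph and a proper subset `α`,
`α` is a reachable subset if and only if `L[αᶜ,αᶜ]` is invertible. -/
theorem reachable_iff_submatrix_invertible {n : ℕ} (A : Matrix (Fin n) (Fin n) ℝ)
    (hA : ∀ i j, 0 ≤ A i j) (α : Finset (Fin n)) (hα : α ≠ Finset.univ) :
    ReachableSubset A α ↔ IsUnit (subm (looplessLap A) αᶜ αᶜ).det :=
  reachable_iff_submatrix_invertible_general A hA α
end

section
/- If Q is a loopy Laplacian (Z-matrix with nonnegative row sums) and α is a reachable subset, then the Kron-reduced matrix Q_red = Q/Q[αᶜ,αᶜ] is again a loopy Laplacian, i.e., a Z-matrix with nonnegative row sums. Moreover, if Q has all row sums equal to zero (loop-less Laplacian), then Q_red has all row sums equal to zero. -/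
open Matrix Finset

/-- Maximum principle for weakly chained diagonally dominant Z-matrices. -/
lemma key_nonneg {ι : Type*} [Fintype ι] [DecidableEq ι] (D : Matrix ι ι ℝ)
    (hZ : ∀ i j, i ≠ j → D i j ≤ 0) (hrow : ∀ i, 0 ≤ ∑ j, D i j)
    (hchain : ∀ i, ∃ k, Relation.ReflTransGen (fun u v => D u v < 0) i k ∧ 0 < ∑ j, D k j)
    (x : ι → ℝ) (hx : ∀ i, 0 ≤ ∑ j, D i j * x j) : ∀ i, 0 ≤ x i := by
  by_contra hcon
  push_neg at hcon
  obtain ⟨i0, hi0⟩ := hcon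
  obtain ⟨m0, -, hm0⟩ := Finset.exists_min_image Finset.univ x ⟨i0, Finset.mem_univ i0⟩
  have hm0lt : x m0 < 0 := lt_of_le_of_lt (hm0 i0 (Finset.mem_univ i0)) hi0
  have claim : ∀ u, x u = x m0 → (∑ j, D u j) = 0 ∧ ∀ v, D u v < 0 → x v = x m0 := by
    intro u hu
    have hterm : ∀ j ∈ Finset.univ, D u j * x j ≤ D u j * x m0 := by
      intro j _
      rcases eq_or_ne j u with rfl | hj
      · rw [hu]
      · exact mul_le_mul_of_nonpos_left (hm0 j (Finset.mem_univ j)) (hZ u j hj.symm)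
    have hsum : ∑ j, D u j * x j ≤ ∑ j, D u j * x m0 := Finset.sum_le_sum hterm
    have hsm : ∑ j, D u j * x m0 = (∑ j, D u j) * x m0 := (Finset.sum_mul ..).symm
    have h1 : (0:ℝ) ≤ ∑ j, D u j * x j := hx u
    have h2 : (∑ j, D u j) * x m0 ≤ 0 :=
      mul_nonpos_of_nonneg_of_nonpos (hrow u) hm0lt.le
    have heq : ∑ j, D u j * x j = ∑ j, D u j * x m0 := le_antisymm hsum (by linarith)
    constructor
    · nlinarith [hrow u, hx u]
    · intro v hv
      by_contra hvne
      have hvlt : x m0 < x v := lt_of_le_of_ne (hm0 v (Finset.mem_univ v)) (fun h => hvne h.symm)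
      have : ∑ j, D u j * x j < ∑ j, D u j * x m0 :=
        Finset.sum_lt_sum hterm ⟨v, Finset.mem_univ v, mul_lt_mul_of_neg_left hvlt hv⟩
      linarith
  obtain ⟨k, hpath, hk⟩ := hchain m0
  have hxk : x k = x m0 := by
    clear hk
    induction hpath with
    | refl => rfl
    | tail h e ih => exact (claim _ ih).2 _ e
  have := (claim k hxk).1
  linarith

lemma key_det {ι : Type*} [Fintype ι] [DecidableEq ι] (D : Matrix ι ι ℝ)
    (hZ : ∀ i j, i ≠ j → D i j ≤ 0) (hrow : ∀ i, 0 ≤ ∑ j, D i j)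
    (hchain : ∀ i, ∃ k, Relation.ReflTransGen (fun u v => D u v < 0) i k ∧ 0 < ∑ j, D k j) :
    D.det ≠ 0 := by
  intro h
  obtain ⟨v, hv0, hv⟩ := (Matrix.exists_mulVec_eq_zero_iff).mpr h
  have hvi : ∀ i, ∑ j, D i j * v j = 0 := by
    intro i
    have := congrFun hv i
    simpa [Matrix.mulVec, dotProduct] using this
  have h1 : ∀ i, 0 ≤ v i :=
    key_nonneg D hZ hrow hchain v (fun i => (hvi i).ge)
  have h2 : ∀ i, 0 ≤ -v i :=
    key_nonneg D hZ hrow hchain (fun j => -v j) (by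
      intro i
      have : ∑ j, D i j * -v j = -∑ j, D i j * v j := by
        simp [Finset.sum_neg_distrib, mul_neg]
      rw [this, hvi i]; norm_num)
  exact hv0 (funext fun i => le_antisymm (by simpa using h2 i) (h1 i))

lemma key_inv_nonneg {ι : Type*} [Fintype ι] [DecidableEq ι] (D : Matrix ι ι ℝ)
    (hZ : ∀ i j, i ≠ j → D i j ≤ 0) (hrow : ∀ i, 0 ≤ ∑ j, D i j)
    (hchain : ∀ i, ∃ k, Relation.ReflTransGen (fun u v => D u v < 0) i k ∧ 0 < ∑ j, D k j) :
    ∀ k l, 0 ≤ D⁻¹ k l := by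
  intro k l
  have hdet := key_det D hZ hrow hchain
  have hDinv : D * D⁻¹ = 1 := Matrix.mul_nonsing_inv D (isUnit_iff_ne_zero.mpr hdet)
  refine key_nonneg D hZ hrow hchain (fun p => D⁻¹ p l) (fun i => ?_) k
  have : ∑ j, D i j * D⁻¹ j l = (D * D⁻¹) i l := (Matrix.mul_apply).symm
  rw [this, hDinv]
  rcases eq_or_ne i l with rfl | h
  · simp
  · simp [Matrix.one_apply_ne h]

/-- Truncate a path ending in `α` at the first entry into `α`. -/
lemma prefix_path {n : ℕ} (r : Fin n → Fin n → Prop) (α : Finset (Fin n)) :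
    ∀ i j, Relation.ReflTransGen r i j → i ∉ α → j ∈ α →
    ∃ k, k ∉ α ∧ (∃ v ∈ α, r k v) ∧
      Relation.ReflTransGen (fun u w => u ∉ α ∧ w ∉ α ∧ r u w) i k := by
  intro i j h
  induction h using Relation.ReflTransGen.head_induction_on with
  | refl => intro hi hj; exact absurd hj hi
  | head e _ ih =>
    rename_i a b _
    intro ha hj
    by_cases hb : b ∈ α
    · exact ⟨a, ha, ⟨b, hb, e⟩, Relation.ReflTransGen.refl⟩
    · obtain ⟨k, hk, hv, hp⟩ := ih hb hj
      exact ⟨k, hk, hv, Relation.ReflTransGen.head ⟨ha, hb, e⟩ hp⟩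

lemma lift_path {n : ℕ} (r : Fin n → Fin n → Prop) (α : Finset (Fin n)) {i k : Fin n}
    (h : Relation.ReflTransGen (fun u w => u ∉ α ∧ w ∉ α ∧ r u w) i k) :
    ∀ (hi : i ∈ αᶜ) (hk : k ∈ αᶜ),
      Relation.ReflTransGen (fun u v : ↥(αᶜ) => r u v) ⟨i, hi⟩ ⟨k, hk⟩ := by
  induction h with
  | refl => intro hi hk; exact Relation.ReflTransGen.refl
  | tail h' e ih =>
    intro hi hk
    exact Relation.ReflTransGen.tail (ih hi (Finset.mem_compl.mpr e.1)) e.2.2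



/-- The class of loopy Laplacians (Z-matrices with nonnegative row sums) is closed under
Kron reduction with respect to a reachable subset, and zero row sums are preserved. -/
theorem kron_reduction_closure {n : ℕ} (Q : Matrix (Fin n) (Fin n) ℝ)
    (hZ : ∀ i j, i ≠ j → Q i j ≤ 0) (hrow : ∀ i, 0 ≤ ∑ j, Q i j)
    (α : Finset (Fin n))
    (hreach : ∀ i ∉ α, ∃ j ∈ α, Relation.ReflTransGen (fun u v => Q u v < 0) i j) :
    (∀ i j : α, i ≠ j → schur Q α i j ≤ 0) ∧
    (∀ i : α, 0 ≤ ∑ j, schur Q α i j) ∧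
    ((∀ i, ∑ j, Q i j = 0) → ∀ i : α, ∑ j, schur Q α i j = 0) := by
  set D := subm Q αᶜ αᶜ with hD
  set B := subm Q α αᶜ with hB
  set C := subm Q αᶜ α with hC
  have hBle : ∀ (i : α) (k : ↥(αᶜ)), B i k ≤ 0 := by
    intro i k
    exact hZ _ _ (fun h => (Finset.mem_compl.mp k.2) (h ▸ i.2))
  have hCle : ∀ (k : ↥(αᶜ)) (j : α), C k j ≤ 0 := by
    intro k j
    exact hZ _ _ (fun h => (Finset.mem_compl.mp k.2) (h.symm ▸ j.2))
  have hDZ : ∀ i j : ↥(αᶜ), i ≠ j → D i j ≤ 0 := by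
    intro i j hij
    exact hZ _ _ (Subtype.coe_injective.ne hij)
  have hDrowval : ∀ k : ↥(αᶜ), ∑ j, D k j = ∑ j ∈ αᶜ, Q ↑k j := by
    intro k
    exact Finset.sum_coe_sort (αᶜ) (fun j => Q ↑k j)
  have hsplit : ∀ u : Fin n, ∑ j ∈ αᶜ, Q u j = (∑ j, Q u j) - ∑ j ∈ α, Q u j := by
    intro u
    have := Finset.sum_add_sum_compl α (fun j => Q u j)
    linarith
  have halpha_nonpos : ∀ u : Fin n, u ∉ α → ∑ j ∈ α, Q u j ≤ 0 := by
    intro u hu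
    exact Finset.sum_nonpos (fun j hj => hZ u j (fun h => hu (h ▸ hj)))
  have hDrow : ∀ k : ↥(αᶜ), 0 ≤ ∑ j, D k j := by
    intro k
    rw [hDrowval, hsplit]
    have := halpha_nonpos ↑k (Finset.mem_compl.mp k.2)
    have := hrow ↑k
    linarith
  have hDchain : ∀ i : ↥(αᶜ), ∃ k, Relation.ReflTransGen (fun u v : ↥(αᶜ) => D u v < 0) i k ∧
      0 < ∑ j, D k j := by
    intro i
    obtain ⟨j, hj, hpath⟩ := hreach ↑i (Finset.mem_compl.mp i.2)
    obtain ⟨k, hk, ⟨v, hv, hkv⟩, hp⟩ := prefix_path _ α ↑i j hpath (Finset.mem_compl.mp i.2) hj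
    have hkc : (k : Fin n) ∈ αᶜ := Finset.mem_compl.mpr hk
    refine ⟨⟨k, hkc⟩, ?_, ?_⟩
    · exact lift_path (fun u v => Q u v < 0) α hp i.2 hkc
    · rw [hDrowval, hsplit]
      have h1 : ∑ j ∈ α, Q k j ≤ Q k v := by
        have hs := Finset.single_le_sum (f := fun j => -Q k j)
          (fun j hj => neg_nonneg.mpr (hZ k j (fun h => hk (h ▸ hj)))) hv
        have hs' : -Q k v ≤ ∑ j ∈ α, -Q k j := hs
        have h2 : ∑ j ∈ α, -Q k j = -∑ j ∈ α, Q k j := by simp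
        rw [h2] at hs'; linarith
      have := hrow k
      linarith
  have hdet := key_det D hDZ hDrow hDchain
  have hinv := key_inv_nonneg D hDZ hDrow hDchain
  have hunit : IsUnit D.det := isUnit_iff_ne_zero.mpr hdet
  set E := B * D⁻¹ with hE
  have hEle : ∀ (i : α) (k : ↥(αᶜ)), E i k ≤ 0 := by
    intro i k
    rw [hE, Matrix.mul_apply]
    exact Finset.sum_nonpos fun l _ => mul_nonpos_of_nonpos_of_nonneg (hBle i l) (hinv l k)
  have hschur_entry : ∀ i j : α, schur Q α i j = Q ↑i ↑j - (E * C) i j := by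
    intro i j
    rfl
  have hECnn : ∀ i j : α, 0 ≤ (E * C) i j := by
    intro i j
    rw [Matrix.mul_apply]
    refine Finset.sum_nonneg fun k _ => ?_
    have := hEle i k
    have := hCle k j
    nlinarith
  have hED : E * D = B := by
    rw [hE, Matrix.mul_assoc, Matrix.nonsing_inv_mul D hunit, Matrix.mul_one]
  -- key row-sum identity
  have hSid : ∀ i : α, ∑ j, schur Q α i j =
      (∑ j, Q ↑i j) - ∑ k : ↥(αᶜ), E i k * (∑ j, Q ↑k j) := by
    intro i
    have h1 : ∑ j : α, schur Q α i j = (∑ j : α, Q ↑i ↑j) - ∑ j : α, (E * C) i j := by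
      rw [← Finset.sum_sub_distrib]
      exact Finset.sum_congr rfl fun j _ => hschur_entry i j
    have h2 : ∑ j : α, (E * C) i j = ∑ k : ↥(αᶜ), E i k * ∑ j : α, C k j := by
      simp only [Matrix.mul_apply]
      rw [Finset.sum_comm]
      exact Finset.sum_congr rfl fun k _ => (Finset.mul_sum ..).symm
    have hg : ∀ k : ↥(αᶜ), ∑ j : α, C k j = (∑ j, Q ↑k j) - ∑ l : ↥(αᶜ), D k l := by
      intro k
      have hcs : ∑ j : α, C k j = ∑ j ∈ α, Q ↑k j := Finset.sum_coe_sort α (fun j => Q ↑k j)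
      rw [hcs, hDrowval k, hsplit ↑k]
      ring
    have h3 : ∑ k : ↥(αᶜ), E i k * ((∑ j, Q ↑k j) - ∑ l : ↥(αᶜ), D k l)
        = (∑ k : ↥(αᶜ), E i k * (∑ j, Q ↑k j)) - ∑ l : ↥(αᶜ), B i l := by
      rw [← hED]
      have : ∀ k : ↥(αᶜ), E i k * ((∑ j, Q ↑k j) - ∑ l : ↥(αᶜ), D k l)
          = E i k * (∑ j, Q ↑k j) - ∑ l : ↥(αᶜ), E i k * D k l := by
        intro k
        rw [mul_sub]
        congr 1
        exact Finset.mul_sum _ _ _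
      rw [Finset.sum_congr rfl fun k _ => this k, Finset.sum_sub_distrib, Finset.sum_comm]
      simp [Matrix.mul_apply]
    have h4 : ∑ j : α, Q ↑i ↑j = ∑ j ∈ α, Q ↑i j := Finset.sum_coe_sort α (fun j => Q ↑i j)
    have h5 : ∑ l : ↥(αᶜ), B i l = ∑ j ∈ αᶜ, Q ↑i j := Finset.sum_coe_sort (αᶜ) (fun j => Q ↑i j)
    have h6 := Finset.sum_add_sum_compl α (fun j => Q ↑i j)
    rw [h1, h2,
      show (∑ k : ↥(αᶜ), E i k * ∑ j : α, C k j)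
          = ∑ k : ↥(αᶜ), E i k * ((∑ j, Q ↑k j) - ∑ l : ↥(αᶜ), D k l) from
        Finset.sum_congr rfl fun k _ => by rw [hg k],
      h3, h4, h5]
    linarith
  refine ⟨?_, ?_, ?_⟩
  · intro i j hij
    rw [hschur_entry i j]
    have h1 := hZ ↑i ↑j (Subtype.coe_injective.ne hij)
    have h2 := hECnn i j
    linarith
  · intro i
    rw [hSid i]
    have h1 : ∑ k : ↥(αᶜ), E i k * (∑ j, Q ↑k j) ≤ 0 :=
      Finset.sum_nonpos fun k _ => mul_nonpos_of_nonpos_of_nonneg (hEle i k) (hrow ↑k)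
    have := hrow ↑i
    linarith
  · intro h0 i
    rw [hSid i, h0 ↑i]
    simp only [h0]
    simp
end

section
/- Let Q be a loopy Laplacian of a directed graph and α a reachable subset. Then the right accompanying matrix Q_rac = −Q[αᶜ,αᶜ]^{-1} Q[αᶜ,α] and the left accompanying matrix Q_lac = −Q[α,αᶜ] Q[αᶜ,αᶜ]^{-1} are entrywise nonnegative. -/
/-!
Write `B = Q[αᶜ,αᶜ]`. The heart of the argument is a minimum principle: if `B x ≥ 0` and `x`
had a negative entry, extend `x` by zero on `α` and look at a vertex where it is minimal. At such
a vertex the row of `Q` can only balance if every out-neighbour along a negative edge carries the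
same minimal value, so the minimum spreads along the path that reaches `α`, where the extension
vanishes. Hence `B x ≥ 0 → x ≥ 0`, i.e. `B` is a monotone matrix: it is invertible and its
inverse is entrywise nonnegative. The accompanying matrices are this inverse times minus an
off-diagonal block of `Q`, which is entrywise nonnegative.
-/

open Matrix Finset

namespace Matrix

variable {κ 𝕜 : Type*} [Fintype κ] [DecidableEq κ] [Field 𝕜] [LinearOrder 𝕜]
  [IsStrictOrderedRing 𝕜] {B : Matrix κ κ 𝕜}

/-- Monotone matrices in the sense of Collatz. -/
def IsMonotone (B : Matrix κ κ 𝕜) : Prop :=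
  ∀ x : κ → 𝕜, 0 ≤ B *ᵥ x → 0 ≤ x

theorem IsMonotone.isUnit_det (hB : B.IsMonotone) : IsUnit B.det := by
  rw [isUnit_iff_ne_zero]
  intro hdet
  obtain ⟨v, hv0, hv⟩ := exists_mulVec_eq_zero_iff.mpr hdet
  have hv_nonneg : 0 ≤ v := hB v hv.ge
  have hv_nonpos : -v ≥ 0 := hB (-v) (by rw [mulVec_neg, hv, neg_zero])
  exact hv0 (le_antisymm (neg_nonneg.mp hv_nonpos) hv_nonneg)

theorem IsMonotone.inv_apply_nonneg (hB : B.IsMonotone) (i j : κ) : 0 ≤ B⁻¹ i j := by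
  have hcol : B *ᵥ B⁻¹.col j = Pi.single j 1 := by
    rw [← mulVec_single_one, mulVec_mulVec, mul_nonsing_inv _ hB.isUnit_det, one_mulVec]
  have hsingle : (0 : κ → 𝕜) ≤ Pi.single j 1 := Pi.single_nonneg.mpr zero_le_one
  exact hB _ (hcol ▸ hsingle) i

end Matrix

theorem Matrix.neg_mul_apply_nonneg_of_nonneg_of_nonpos {l m n 𝕜 : Type*} [Fintype m]
    [Ring 𝕜] [PartialOrder 𝕜] [IsOrderedRing 𝕜] {A : Matrix l m 𝕜} {B : Matrix m n 𝕜}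
    (hA : ∀ i k, 0 ≤ A i k) (hB : ∀ k j, B k j ≤ 0) (i : l) (j : n) :
    0 ≤ (-(A * B)) i j :=
  neg_nonneg.mpr (sum_nonpos fun k _ => mul_nonpos_of_nonneg_of_nonpos (hA i k) (hB k j))

theorem Matrix.neg_mul_apply_nonneg_of_nonpos_of_nonneg {l m n 𝕜 : Type*} [Fintype m]
    [Ring 𝕜] [PartialOrder 𝕜] [IsOrderedRing 𝕜] {A : Matrix l m 𝕜} {B : Matrix m n 𝕜}
    (hA : ∀ i k, A i k ≤ 0) (hB : ∀ k j, 0 ≤ B k j) (i : l) (j : n) :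
    0 ≤ (-(A * B)) i j :=
  neg_nonneg.mpr (sum_nonpos fun k _ => mul_nonpos_of_nonpos_of_nonneg (hA i k) (hB k j))

section MinimumPrinciple

variable {ι : Type*} [Fintype ι] {Q : Matrix ι ι ℝ}

theorem eq_of_isMin_of_mulVec_apply_nonneg (hZ : ∀ i j, i ≠ j → Q i j ≤ 0)
    (hrow : ∀ i, 0 ≤ ∑ j, Q i j) {y : ι → ℝ} {i c : ι} (hmin : ∀ j, y i ≤ y j)
    (hneg : y i ≤ 0) (hsuper : 0 ≤ (Q *ᵥ y) i) (hc : Q i c < 0) : y c = y i := by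
  have hsplit : (Q *ᵥ y) i = ∑ j, Q i j * (y j - y i) + (∑ j, Q i j) * y i := by
    simp only [mulVec, dotProduct, mul_sub, sum_sub_distrib, sum_mul]
    ring
  have hterm : ∀ j, Q i j * (y j - y i) ≤ 0 := by
    intro j
    rcases eq_or_ne i j with rfl | hij
    · simp
    · exact mul_nonpos_of_nonpos_of_nonneg (hZ i j hij) (sub_nonneg.mpr (hmin j))
  have hsum : ∑ j, Q i j * (y j - y i) = 0 := by
    have := mul_nonpos_of_nonneg_of_nonpos (hrow i) hneg
    linarith [sum_nonpos fun j (_ : j ∈ univ) => hterm j]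
  have hterm_c := (sum_eq_zero_iff_of_nonpos fun j _ => hterm j).mp hsum c (mem_univ c)
  exact sub_eq_zero.mp ((mul_eq_zero.mp hterm_c).resolve_left hc.ne)

theorem eq_of_reflTransGen_of_isMin (hZ : ∀ i j, i ≠ j → Q i j ≤ 0)
    (hrow : ∀ i, 0 ≤ ∑ j, Q i j) {y : ι → ℝ} {i c : ι} (hmin : ∀ j, y i ≤ y j)
    (hneg : y i ≤ 0) (hsuper : ∀ b, y b = y i → 0 ≤ (Q *ᵥ y) b)
    (hpath : Relation.ReflTransGen (fun u v => Q u v < 0) i c) : y c = y i := by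
  induction hpath with
  | refl => rfl
  | tail _ hbc ih =>
    exact (eq_of_isMin_of_mulVec_apply_nonneg hZ hrow (fun j => ih.le.trans (hmin j))
      (ih.le.trans hneg) (hsuper _ ih) hbc).trans ih

end MinimumPrinciple

section PrincipalSubmatrix

variable {ι : Type*} [Fintype ι] [DecidableEq ι] {Q : Matrix ι ι ℝ} {α : Finset ι}

theorem mulVec_extend_apply (x : (αᶜ : Finset ι) → ℝ) (i : (αᶜ : Finset ι)) :
    (Q *ᵥ Function.extend Subtype.val x 0) i = (subm Q αᶜ αᶜ *ᵥ x) i := by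
  simp only [mulVec, dotProduct, subm, of_apply]
  rw [← Fintype.sum_subtype_add_sum_subtype (· ∈ αᶜ)]
  have houtside : ∀ j : {j // j ∉ αᶜ}, Q i j * Function.extend Subtype.val x 0 j = 0 := by
    intro j
    rw [Function.extend_apply' _ _ _ fun ⟨a, ha⟩ => j.2 (ha ▸ a.2), Pi.zero_apply, mul_zero]
  simp only [Subtype.val_injective.extend_apply, houtside, sum_const_zero, add_zero]
  convert rfl

theorem subm_nonpos_of_disjoint (hZ : ∀ i j, i ≠ j → Q i j ≤ 0) {s t : Finset ι}
    (hst : Disjoint s t) (i : s) (j : t) : subm Q s t i j ≤ 0 :=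
  hZ _ _ fun h => disjoint_left.mp hst i.2 (h ▸ j.2)

theorem isMonotone_subm_compl (hZ : ∀ i j, i ≠ j → Q i j ≤ 0) (hrow : ∀ i, 0 ≤ ∑ j, Q i j)
    (hreach : ∀ i ∉ α, ∃ j ∈ α, Relation.ReflTransGen (fun u v => Q u v < 0) i j) :
    (subm Q αᶜ αᶜ).IsMonotone := by
  intro x hx
  by_contra hneg
  obtain ⟨k, hk⟩ : ∃ k, x k < 0 := by simpa [Pi.le_def] using hneg
  set y := Function.extend Subtype.val x (0 : ι → ℝ)
  have hy_on : ∀ j : (αᶜ : Finset ι), y j = x j := fun j => Subtype.val_injective.extend_apply _ _ _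
  have hy_off : ∀ j ∈ α, y j = 0 := fun j hj =>
    Function.extend_apply' _ _ _ fun ⟨a, ha⟩ => mem_compl.mp a.2 (ha ▸ hj)
  have : Nonempty ι := ⟨k⟩
  obtain ⟨i, hmin⟩ := Finite.exists_min y
  have hyi : y i < 0 := (hmin k).trans_lt ((hy_on k).symm ▸ hk)
  have hcompl_of_eq : ∀ b, y b = y i → b ∈ αᶜ := fun b hb =>
    mem_compl.mpr fun hbα => hyi.ne (hb ▸ hy_off b hbα)
  have hsuper : ∀ b, y b = y i → 0 ≤ (Q *ᵥ y) b := fun b hb => by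
    have hb' := hx ⟨b, hcompl_of_eq b hb⟩
    rwa [Pi.zero_apply, ← mulVec_extend_apply] at hb'
  obtain ⟨j, hjα, hpath⟩ := hreach i (mem_compl.mp (hcompl_of_eq i rfl))
  have hyj := eq_of_reflTransGen_of_isMin hZ hrow hmin hyi.le hsuper hpath
  exact hyi.ne (hyj ▸ hy_off j hjα)

end PrincipalSubmatrix

/-- The right and left accompanying matrices of the Kron reduction of a loopy Laplacian
with respect to a reachable subset are entrywise nonnegative. -/
theorem accompanying_matrices_nonneg {n : ℕ} (Q : Matrix (Fin n) (Fin n) ℝ)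
    (hZ : ∀ i j, i ≠ j → Q i j ≤ 0) (hrow : ∀ i, 0 ≤ ∑ j, Q i j)
    (α : Finset (Fin n))
    (hreach : ∀ i ∉ α, ∃ j ∈ α, Relation.ReflTransGen (fun u v => Q u v < 0) i j) :
    (∀ (i : (αᶜ : Finset (Fin n))) (j : α), 0 ≤ (-((subm Q αᶜ αᶜ)⁻¹ * subm Q αᶜ α)) i j) ∧
    (∀ (i : α) (j : (αᶜ : Finset (Fin n))), 0 ≤ (-(subm Q α αᶜ * (subm Q αᶜ αᶜ)⁻¹)) i j) := by
  have hinv := (isMonotone_subm_compl hZ hrow hreach).inv_apply_nonneg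
  exact ⟨neg_mul_apply_nonneg_of_nonneg_of_nonpos hinv
      (subm_nonpos_of_disjoint hZ disjoint_compl_left),
    neg_mul_apply_nonneg_of_nonpos_of_nonneg
      (subm_nonpos_of_disjoint hZ disjoint_compl_right) hinv⟩
end

section
/- Let L be the loop-less Laplacian of a directed graph and α a reachable subset. Then the matrix L_rac = −L[αᶜ,αᶜ]^{-1} L[αᶜ,α] is row stochastic, i.e., nonnegative with each row summing to 1. -/
open Matrix Finset

lemma union_erase {n : ℕ} (α : Finset (Fin n)) {k : Fin n} (hk : k ∈ αᶜ) :
    α ∪ αᶜ.erase k = Finset.univ.erase k := by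
  have hkα : k ∉ α := Finset.mem_compl.mp hk
  ext t
  simp only [Finset.mem_union, Finset.mem_erase, Finset.mem_compl, Finset.mem_univ, and_true]
  constructor
  · rintro (h | ⟨h1, h2⟩)
    · exact fun ht => hkα (ht ▸ h)
    · exact h1
  · intro h
    by_cases ht : t ∈ α
    · exact Or.inl ht
    · exact Or.inr ⟨h, ht⟩

lemma sum_row {n : ℕ} (A : Matrix (Fin n) (Fin n) ℝ) (α : Finset (Fin n))
    {k : Fin n} (hk : k ∈ αᶜ) :
    ∑ j : (αᶜ : Finset (Fin n)), subm (looplessLap A) αᶜ αᶜ ⟨k, hk⟩ j = ∑ j ∈ α, A k j := by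
  have h1 : ∑ j : (αᶜ : Finset (Fin n)), subm (looplessLap A) αᶜ αᶜ ⟨k, hk⟩ j
      = ∑ j ∈ αᶜ, (if k = j then (∑ t, A k t) - A k k else -A k j) := by
    rw [← Finset.sum_coe_sort (αᶜ) (fun j => if k = j then (∑ t, A k t) - A k k else -A k j)]
    rfl
  rw [h1, ← Finset.add_sum_erase _ _ hk]
  simp only [if_pos rfl]
  have h2 : ∑ j ∈ αᶜ.erase k, (if k = j then (∑ t, A k t) - A k k else -A k j)
      = -∑ j ∈ αᶜ.erase k, A k j := by
    rw [← Finset.sum_neg_distrib]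
    refine Finset.sum_congr rfl fun j hj => ?_
    rw [if_neg (fun h => (Finset.mem_erase.mp hj).1 h.symm)]
  rw [h2]
  have h3 : (∑ t, A k t) - A k k = ∑ t ∈ Finset.univ.erase k, A k t := by
    rw [Finset.sum_erase_eq_sub (Finset.mem_univ k)]
  have h4 : ∑ t ∈ Finset.univ.erase k, A k t = ∑ j ∈ α, A k j + ∑ j ∈ αᶜ.erase k, A k j := by
    rw [← union_erase α hk, Finset.sum_union]
    exact Finset.disjoint_left.mpr fun t ht ht' =>
      (Finset.mem_compl.mp (Finset.mem_of_mem_erase ht')) ht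
  rw [h3, h4]; simp

/-- Discrete maximum principle: if `B x ≥ 0` entrywise for `B = L[αᶜ,αᶜ]`, then `x ≥ 0`. -/
lemma key_pos {n : ℕ} (A : Matrix (Fin n) (Fin n) ℝ) (hA : ∀ i j, 0 ≤ A i j)
    (α : Finset (Fin n)) (hreach : ReachableSubset A α)
    (x : (αᶜ : Finset (Fin n)) → ℝ)
    (hx : ∀ i, 0 ≤ ∑ j, subm (looplessLap A) αᶜ αᶜ i j * x j) :
    ∀ i, 0 ≤ x i := by
  by_contra hcon
  push_neg at hcon
  obtain ⟨iw, hiw⟩ := hcon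
  obtain ⟨i₀, -, hmin⟩ := Finset.exists_min_image (Finset.univ : Finset (αᶜ : Finset (Fin n))) x
    ⟨iw, Finset.mem_univ iw⟩
  have hmin' : ∀ i, x i₀ ≤ x i := fun i => hmin i (Finset.mem_univ i)
  set m := x i₀ with hm_def
  have hm : m < 0 := lt_of_le_of_lt (hmin' iw) hiw
  -- propagation step
  have step : ∀ (k : Fin n) (hk : k ∈ αᶜ), x ⟨k, hk⟩ = m →
      ∀ l, 0 < A k l → ∃ hl : l ∈ αᶜ, x ⟨l, hl⟩ = m := by
    intro k hk hxk l hAl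
    set d := (∑ t, A k t) - A k k with hd
    set f : (αᶜ : Finset (Fin n)) → ℝ :=
      fun j => subm (looplessLap A) αᶜ αᶜ ⟨k, hk⟩ j * x j with hf
    set g : (αᶜ : Finset (Fin n)) → ℝ :=
      fun j => subm (looplessLap A) αᶜ αᶜ ⟨k, hk⟩ j * m with hg
    have hBapp : ∀ j : (αᶜ : Finset (Fin n)),
        subm (looplessLap A) αᶜ αᶜ ⟨k, hk⟩ j = if k = (j : Fin n) then d else -A k j := by
      intro j; rfl
    have hfg : ∀ j, f j ≤ g j := by
      intro j
      simp only [hf, hg, hBapp]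
      by_cases h : k = (j : Fin n)
      · have : j = ⟨k, hk⟩ := Subtype.ext h.symm
        rw [this]; rw [hxk]
      · rw [if_neg h]
        exact mul_le_mul_of_nonpos_left (hmin' j) (neg_nonpos.mpr (hA k j))
    have h0 : 0 ≤ ∑ j, f j := hx ⟨k, hk⟩
    have hsum_g : ∑ j, g j = m * ∑ j ∈ α, A k j := by
      simp only [hg]
      rw [← Finset.sum_mul, sum_row A α hk, mul_comm]
    have hSα : 0 ≤ ∑ j ∈ α, A k j := Finset.sum_nonneg fun j _ => hA k j
    have hfg_sum : ∑ j, f j ≤ ∑ j, g j :=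
      Finset.sum_le_sum fun j _ => hfg j
    have hSα0 : ∑ j ∈ α, A k j = 0 := by
      by_contra hne
      have hpos : 0 < ∑ j ∈ α, A k j := lt_of_le_of_ne hSα (Ne.symm hne)
      have : m * ∑ j ∈ α, A k j < 0 := mul_neg_of_neg_of_pos hm hpos
      linarith [h0.trans (hfg_sum.trans_eq hsum_g)]
    have hzero : ∀ j ∈ α, A k j = 0 :=
      (Finset.sum_eq_zero_iff_of_nonneg fun j _ => hA k j).mp hSα0
    have hlα : l ∉ α := fun h => by
      have := hzero l h; linarith
    have hl : l ∈ αᶜ := Finset.mem_compl.mpr hlα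
    refine ⟨hl, ?_⟩
    by_cases hlk : l = k
    · subst hlk; exact hxk
    · have hsum_g0 : ∑ j, g j = 0 := by rw [hsum_g, hSα0, mul_zero]
      have heq : ∑ j, f j = ∑ j, g j := le_antisymm hfg_sum (by rw [hsum_g0]; exact h0)
      have hall := (Finset.sum_eq_sum_iff_of_le (fun j _ => hfg j)).mp heq
        ⟨l, hl⟩ (Finset.mem_univ _)
      simp only [hf, hg, hBapp] at hall
      rw [if_neg (fun h => hlk h.symm)] at hall
      have hAne : -A k l ≠ 0 := by
        simpa using ne_of_gt hAl
      exact mul_left_cancel₀ hAne hall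
  -- propagate along the reachability path
  obtain ⟨j, hjα, hpath⟩ := hreach i₀ (Finset.mem_compl.mp i₀.2)
  have prop : ∀ {a b : Fin n}, Relation.ReflTransGen (fun u v => 0 < A u v) a b →
      ∀ ha : a ∈ αᶜ, x ⟨a, ha⟩ = m → ∃ hb : b ∈ αᶜ, x ⟨b, hb⟩ = m := by
    intro a b hab
    induction hab with
    | refl => exact fun ha hxa => ⟨ha, hxa⟩
    | tail _ hbc ih =>
      intro ha hxa
      obtain ⟨hb, hxb⟩ := ih ha hxa
      exact step _ hb hxb _ hbc
  obtain ⟨hjc, -⟩ := prop hpath i₀.2 (by simp [hm_def])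
  exact (Finset.mem_compl.mp hjc) hjα


theorem rac_row_stochastic' {n : ℕ} (A : Matrix (Fin n) (Fin n) ℝ)
    (hA : ∀ i j, 0 ≤ A i j) (α : Finset (Fin n)) (hreach : ReachableSubset A α) :
    (∀ (i : (αᶜ : Finset (Fin n))) (j : α),
      0 ≤ (-((subm (looplessLap A) αᶜ αᶜ)⁻¹ * subm (looplessLap A) αᶜ α)) i j) ∧
    (∀ i : (αᶜ : Finset (Fin n)),
      ∑ j, (-((subm (looplessLap A) αᶜ αᶜ)⁻¹ * subm (looplessLap A) αᶜ α)) i j = 1) := by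
  set B := subm (looplessLap A) αᶜ αᶜ with hB
  set C := subm (looplessLap A) αᶜ α with hC
  have hdet : B.det ≠ 0 := by
    intro h
    obtain ⟨v, hv0, hv⟩ := Matrix.exists_mulVec_eq_zero_iff.mpr h
    have hmv : ∀ i, ∑ j, B i j * v j = 0 := by
      intro i
      have := congrFun hv i
      simpa [Matrix.mulVec, dotProduct] using this
    have h1 := key_pos A hA α hreach v (fun i => (hmv i).ge)
    have h2 := key_pos A hA α hreach (-v) (fun i => by
      show 0 ≤ ∑ j, B i j * (-v) j
      simp only [Pi.neg_apply, mul_neg, Finset.sum_neg_distrib, hmv i, neg_zero, le_refl])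
    exact hv0 (funext fun i => le_antisymm (by simpa using h2 i) (h1 i))
  have hdetU : IsUnit B.det := isUnit_iff_ne_zero.mpr hdet
  have hBB : B * B⁻¹ = 1 := Matrix.mul_nonsing_inv B hdetU
  have hBB' : B⁻¹ * B = 1 := Matrix.nonsing_inv_mul B hdetU
  have hCapp : ∀ (a : (αᶜ : Finset (Fin n))) (b : α), C a b = -A a b := by
    intro a b
    have hne : (a : Fin n) ≠ (b : Fin n) := fun h =>
      (Finset.mem_compl.mp a.2) (h ▸ b.2)
    show (if (a : Fin n) = b then _ else -A a b) = -A a b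
    rw [if_neg hne]
  constructor
  · intro i j
    have hx : ∀ i', 0 ≤ ∑ j', B i' j' * (fun t => -(B⁻¹ * C) t j) j' := by
      intro i'
      have hmul : ∑ j', B i' j' * (B⁻¹ * C) j' j = C i' j := by
        have h1 : (B * (B⁻¹ * C)) i' j = C i' j := by
          rw [← Matrix.mul_assoc, hBB, Matrix.one_mul]
        rw [Matrix.mul_apply] at h1
        exact h1
      show 0 ≤ ∑ j', B i' j' * (-(B⁻¹ * C) j' j)
      simp only [mul_neg, Finset.sum_neg_distrib]
      rw [hmul, hCapp]
      simpa using hA i' j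
    have := key_pos A hA α hreach _ hx i
    simpa using this
  · intro i
    have hrow : ∀ k : (αᶜ : Finset (Fin n)),
        ∑ j : α, A (k : Fin n) j = ∑ j', B k j' := by
      intro k
      rw [Finset.sum_coe_sort α (fun j => A (k : Fin n) j), ← sum_row A α k.2]
    calc ∑ j, (-(B⁻¹ * C)) i j
        = ∑ j : α, ∑ k : (αᶜ : Finset (Fin n)), B⁻¹ i k * A (k : Fin n) (j : Fin n) := by
          refine Finset.sum_congr rfl fun j _ => ?_
          rw [Matrix.neg_apply, Matrix.mul_apply, ← Finset.sum_neg_distrib]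
          refine Finset.sum_congr rfl fun k _ => ?_
          rw [hCapp]; ring
      _ = ∑ k : (αᶜ : Finset (Fin n)), ∑ j : α, B⁻¹ i k * A (k : Fin n) (j : Fin n) := Finset.sum_comm
      _ = ∑ k, ∑ j', B⁻¹ i k * B k j' := by
          refine Finset.sum_congr rfl fun k _ => ?_
          rw [← Finset.mul_sum, ← Finset.mul_sum, hrow k]
      _ = ∑ j', (B⁻¹ * B) i j' := by
          rw [Finset.sum_comm]
          exact Finset.sum_congr rfl fun j' _ => (Matrix.mul_apply).symm
      _ = 1 := by rw [hBB']; simp [Matrix.one_apply]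

/-- For the loop-less Laplacian `L` of a directed weighted graph and a reachable subset `α`,
the matrix `L_rac = -L[αᶜ,αᶜ]⁻¹ L[αᶜ,α]` is row stochastic. -/
theorem rac_row_stochastic {n : ℕ} (A : Matrix (Fin n) (Fin n) ℝ)
    (hA : ∀ i j, 0 ≤ A i j) (α : Finset (Fin n)) (hreach : ReachableSubset A α) :
    (∀ (i : (αᶜ : Finset (Fin n))) (j : α),
      0 ≤ (-((subm (looplessLap A) αᶜ αᶜ)⁻¹ * subm (looplessLap A) αᶜ α)) i j) ∧
    (∀ i : (αᶜ : Finset (Fin n)),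
      ∑ j, (-((subm (looplessLap A) αᶜ αᶜ)⁻¹ * subm (looplessLap A) αᶜ α)) i j = 1) := by
  exact rac_row_stochastic' A hA α hreach
end

section
/- Kron reduction preserves weight balancedness: if G is a weight-balanced directed graph (in-degree equals out-degree at each node), α ⊊ [n] with |α| ≥ 2 is such that the interior nodes have no self-loops (A_ii = 0 for i ∈ αᶜ), then the Kron-reduced graph G_red is also weight balanced. -/
open Matrix Finset

/-! The row sums of the loopy Laplacian `Q` are the self-loop weights `Aᵢᵢ`, and under weight
balance so are its column sums. Both vanish on the eliminated nodes `αᶜ`, so `Q 𝟙 = diag A` and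
`𝟙ᵀ Q = diag A` hold with zero right-hand side on `αᶜ`, and such identities pass to the Schur
complement: `Q_red` again has row and column sums `Aᵢᵢ`. The out- and in-degree of node `i` of the
recovered graph differ by the row sum minus the column sum of `Q_red` at `i`, hence agree. -/

section

variable {ι : Type*} [Fintype ι] [DecidableEq ι]

lemma subm_mulVec_add_subm_compl_mulVec (M : Matrix ι ι ℝ) (s α : Finset ι) (x : ι → ℝ) :
    subm M s α *ᵥ (fun j : α => x j) + subm M s αᶜ *ᵥ (fun j : (αᶜ : Finset ι) => x j)
      = fun i : s => (M *ᵥ x) i := by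
  funext i
  simp only [Pi.add_apply, mulVec, dotProduct, subm, of_apply]
  rw [sum_coe_sort α (fun j => M i j * x j), sum_coe_sort αᶜ (fun j => M i j * x j),
    sum_add_sum_compl]

theorem schur_mulVec_of_mulVec_eq_zero (M : Matrix ι ι ℝ) (α : Finset ι)
    (hC : IsUnit (subm M αᶜ αᶜ).det) (x : ι → ℝ) (hx : ∀ k ∉ α, (M *ᵥ x) k = 0) :
    schur M α *ᵥ (fun i : α => x i) = fun i : α => (M *ᵥ x) i := by
  set xα : α → ℝ := fun i => x i
  set xc : (αᶜ : Finset ι) → ℝ := fun k => x k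
  have hcompl : subm M αᶜ αᶜ *ᵥ xc = -(subm M αᶜ α *ᵥ xα) := by
    rw [eq_neg_iff_add_eq_zero, add_comm, subm_mulVec_add_subm_compl_mulVec]
    funext k
    exact hx k (mem_compl.mp k.2)
  have hxc : xc = -((subm M αᶜ αᶜ)⁻¹ *ᵥ (subm M αᶜ α *ᵥ xα)) := by
    rw [← mulVec_neg, ← hcompl, mulVec_mulVec, nonsing_inv_mul _ hC, one_mulVec]
  calc schur M α *ᵥ xα
      = subm M α α *ᵥ xα + subm M α αᶜ *ᵥ -((subm M αᶜ αᶜ)⁻¹ *ᵥ (subm M αᶜ α *ᵥ xα)) := by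
        rw [schur, sub_mulVec, mulVec_neg, mulVec_mulVec, mulVec_mulVec, Matrix.mul_assoc,
          sub_eq_add_neg]
    _ = fun i : α => (M *ᵥ x) i := by
        rw [← hxc, subm_mulVec_add_subm_compl_mulVec]

theorem sum_schur_row_eq (M : Matrix ι ι ℝ) (α : Finset ι) (hC : IsUnit (subm M αᶜ αᶜ).det)
    (h : ∀ k ∉ α, ∑ j, M k j = 0) (i : α) : ∑ j, schur M α i j = ∑ j, M i j := by
  have := congrFun (schur_mulVec_of_mulVec_eq_zero M α hC 1 (by simpa [mulVec, dotProduct])) i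
  simpa [mulVec, dotProduct] using this

lemma subm_transpose (M : Matrix ι ι ℝ) (s t : Finset ι) : subm Mᵀ s t = (subm M t s)ᵀ := rfl

lemma schur_transpose (M : Matrix ι ι ℝ) (α : Finset ι) : schur Mᵀ α = (schur M α)ᵀ := by
  simp only [schur, subm_transpose, transpose_sub, transpose_mul, transpose_nonsing_inv,
    Matrix.mul_assoc]

theorem sum_schur_col_eq (M : Matrix ι ι ℝ) (α : Finset ι) (hC : IsUnit (subm M αᶜ αᶜ).det)
    (h : ∀ k ∉ α, ∑ j, M j k = 0) (i : α) : ∑ j, schur M α j i = ∑ j, M j i := by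
  have hCt : IsUnit (subm Mᵀ αᶜ αᶜ).det := by rwa [subm_transpose, det_transpose]
  simpa only [schur_transpose, transpose_apply] using sum_schur_row_eq Mᵀ α hCt h i

lemma sum_ite_eq_sum_else_neg (S : Matrix ι ι ℝ) (i : ι) :
    ∑ j, (if i = j then ∑ k, S i k else -S i j) = S i i := by
  rw [← add_sum_erase _ _ (mem_univ i), if_pos rfl,
    sum_congr rfl fun j hj => if_neg (ne_of_mem_erase hj).symm, sum_neg_distrib,
    ← add_sum_erase _ _ (mem_univ i)]
  ring

lemma sum_ite_eq_sum_else_neg' (S : Matrix ι ι ℝ) (i : ι) :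
    ∑ j, (if j = i then ∑ k, S j k else -S j i) = S i i + (∑ k, S i k - ∑ k, S k i) := by
  rw [← add_sum_erase _ _ (mem_univ i), if_pos rfl,
    sum_congr rfl fun j hj => if_neg (ne_of_mem_erase hj), sum_neg_distrib,
    ← add_sum_erase _ (fun k => S k i) (mem_univ i)]
  ring

end

lemma sum_loopyLap_row {n : ℕ} (A : Matrix (Fin n) (Fin n) ℝ) (i : Fin n) :
    ∑ j, loopyLap A i j = A i i :=
  sum_ite_eq_sum_else_neg A i

lemma sum_loopyLap_col {n : ℕ} (A : Matrix (Fin n) (Fin n) ℝ)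
    (hbal : ∀ i, ∑ j, A i j = ∑ j, A j i) (i : Fin n) : ∑ j, loopyLap A j i = A i i := by
  have h := sum_ite_eq_sum_else_neg' A i
  rwa [hbal i, sub_self, add_zero] at h

theorem kron_reduction_preserves_weight_balanced_general {n : ℕ} (A : Matrix (Fin n) (Fin n) ℝ)
    (hbal : ∀ i, ∑ j, A i j = ∑ j, A j i)
    (α : Finset (Fin n))
    (hloop : ∀ i ∉ α, A i i = 0)
    (hinv : IsUnit (subm (loopyLap A) αᶜ αᶜ).det) :
    ∀ i : α,
      (∑ j : α, (if i = j then ∑ k, schur (loopyLap A) α i k else -(schur (loopyLap A) α i j)))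
        = ∑ j : α, (if j = i then ∑ k, schur (loopyLap A) α j k else -(schur (loopyLap A) α j i)) := by
  intro i
  have hrow : ∑ k, schur (loopyLap A) α i k = A i i :=
    (sum_schur_row_eq _ α hinv (fun k hk => by rw [sum_loopyLap_row, hloop k hk]) i).trans
      (sum_loopyLap_row A i)
  have hcol : ∑ k, schur (loopyLap A) α k i = A i i :=
    (sum_schur_col_eq _ α hinv (fun k hk => by rw [sum_loopyLap_col A hbal, hloop k hk]) i).trans
      (sum_loopyLap_col A hbal i)
  rw [sum_ite_eq_sum_else_neg, sum_ite_eq_sum_else_neg', hrow, hcol, sub_self, add_zero]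

/-- Kron reduction preserves weight balancedness: if the graph is weight balanced and the
interior nodes carry no self-loops, the Kron-reduced graph is again weight balanced. -/
theorem kron_reduction_preserves_weight_balanced {n : ℕ} (A : Matrix (Fin n) (Fin n) ℝ)
    (hA : ∀ i j, 0 ≤ A i j) (hbal : ∀ i, ∑ j, A i j = ∑ j, A j i)
    (α : Finset (Fin n)) (hcard : 2 ≤ α.card) (hα : α ≠ Finset.univ)
    (hloop : ∀ i ∉ α, A i i = 0)
    (hinv : IsUnit (subm (loopyLap A) αᶜ αᶜ).det) :
    ∀ i : α,
      (∑ j : α, (if i = j then ∑ k, schur (loopyLap A) α i k else -(schur (loopyLap A) α i j)))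
        = ∑ j : α, (if j = i then ∑ k, schur (loopyLap A) α j k else -(schur (loopyLap A) α j i)) :=
  kron_reduction_preserves_weight_balanced_general A hbal α hloop hinv
end

section
/- For a weight-balanced loop-less Laplacian L of a strongly connected directed graph and γ ≠ 0, the Moore–Penrose pseudoinverse satisfies L† = (L + (γ/n) J)^{-1} − (1/(nγ)) J, where J is the all-ones n×n matrix. -/
open Matrix

/-- `X` is the Moore–Penrose pseudoinverse of `A` (the four Penrose conditions). -/
def IsMoorePenrose {m n : Type*} [Fintype m] [Fintype n]
    (A : Matrix m n ℝ) (X : Matrix n m ℝ) : Prop :=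
  A * X * A = A ∧ X * A * X = X ∧ (A * X)ᵀ = A * X ∧ (X * A)ᵀ = X * A

/-!
Write `J` for the all-ones matrix. Since `L` annihilates `1` on both sides, `LJ = JL = 0`, and the
Penrose conditions then force `XJ = JX = 0`. Zero column sums and rank `n - 1` make the range of `L`
the whole hyperplane `1ᗮ`, so `LX`, which fixes the range of `L` and kills `J`, is `1 - J/n`.
Hence `(L + (γ/n)J)(X + (1/(nγ))J) = (1 - J/n) + J/n = 1`.
-/

namespace Matrix

section Ones

variable {R m n k : Type*} [Fintype n] [Semiring R]

theorem mul_ones_eq_zero {A : Matrix m n R} (h : A *ᵥ 1 = 0) :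
    A * (of fun _ _ => 1 : Matrix n k R) = 0 := by
  ext i j
  simpa [mul_apply, mulVec, dotProduct] using congrFun h i

theorem ones_mul_eq_zero {A : Matrix n m R} (h : 1 ᵥ* A = 0) :
    (of fun _ _ => 1 : Matrix k n R) * A = 0 := by
  ext i j
  simpa [mul_apply, vecMul, dotProduct] using congrFun h j

theorem one_vecMul_ones :
    (1 : n → R) ᵥ* (of fun _ _ => 1 : Matrix n k R) = (Fintype.card n : R) • 1 := by
  ext j
  simp [vecMul, dotProduct]

theorem ones_mul_ones :
    (of fun _ _ => 1 : Matrix m n R) * (of fun _ _ => 1 : Matrix n k R) =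
      (Fintype.card n : R) • of fun _ _ => 1 := by
  ext i j
  simp [mul_apply]

end Ones

theorem mul_eq_of_mul_eq_self_of_range_le {R m n k : Type*} [Fintype m] [Fintype n] [Fintype k]
    [CommSemiring R] {P : Matrix m m R} {L : Matrix m n R} {C : Matrix m k R} (hPL : P * L = L)
    (hC : LinearMap.range C.mulVecLin ≤ LinearMap.range L.mulVecLin) : P * C = C := by
  refine ext_iff_mulVec.mpr fun v => ?_
  obtain ⟨w, hw⟩ := hC ⟨v, rfl⟩
  simp only [mulVecLin_apply] at hw
  rw [← mulVec_mulVec, ← hw, mulVec_mulVec, hPL]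

theorem range_mulVecLin_eq_ker_of_vecMul_one_eq_zero {K ι : Type*} [Field K] [Fintype ι]
    [DecidableEq ι] [Nonempty ι] {L : Matrix ι ι K} (hcol : 1 ᵥ* L = 0)
    (hrank : L.rank = Fintype.card ι - 1) :
    LinearMap.range L.mulVecLin = LinearMap.ker (dotProductEquiv K ι 1) := by
  have hle : LinearMap.range L.mulVecLin ≤ LinearMap.ker (dotProductEquiv K ι 1) := by
    rintro _ ⟨x, rfl⟩
    simp [dotProduct_mulVec, hcol]
  refine Submodule.eq_of_le_of_finrank_eq hle ?_
  have hker := Module.Dual.finrank_ker_add_one_of_ne_zero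
    ((LinearEquiv.map_ne_zero_iff (dotProductEquiv K ι)).mpr (one_ne_zero : (1 : ι → K) ≠ 0))
  rw [Module.finrank_fintype_fun_eq_card] at hker
  rw [← Matrix.rank, hrank]
  omega

end Matrix

namespace IsMoorePenrose

variable {m n k : Type*} [Fintype m] [Fintype n] {A : Matrix m n ℝ} {X : Matrix n m ℝ}

theorem mul_eq_zero_of_transpose_mul_eq_zero (hX : IsMoorePenrose A X) {B : Matrix m k ℝ}
    (hB : Aᵀ * B = 0) : X * B = 0 := by
  obtain ⟨-, hXAX, hAX, -⟩ := hX
  calc X * B = X * (A * X)ᵀ * B := by rw [hAX, ← Matrix.mul_assoc, hXAX]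
    _ = 0 := by rw [transpose_mul, Matrix.mul_assoc, Matrix.mul_assoc, hB, Matrix.mul_zero,
      Matrix.mul_zero]

theorem mul_eq_zero_of_mul_transpose_eq_zero (hX : IsMoorePenrose A X) {B : Matrix k n ℝ}
    (hB : B * Aᵀ = 0) : B * X = 0 := by
  obtain ⟨-, hXAX, -, hXA⟩ := hX
  calc B * X = B * (X * A)ᵀ * X := by rw [hXA, Matrix.mul_assoc B, hXAX]
    _ = 0 := by rw [transpose_mul, ← Matrix.mul_assoc, hB, Matrix.zero_mul, Matrix.zero_mul]

theorem mul_eq_one_sub_ones {ι : Type*} [Fintype ι] [DecidableEq ι] [Nonempty ι]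
    {L X : Matrix ι ι ℝ} (hX : IsMoorePenrose L X) (hcol : 1 ᵥ* L = 0)
    (hrank : L.rank = Fintype.card ι - 1) :
    L * X = 1 - (Fintype.card ι : ℝ)⁻¹ • of fun _ _ => 1 := by
  set C : Matrix ι ι ℝ := 1 - (Fintype.card ι : ℝ)⁻¹ • of fun _ _ => 1
  have hXJ : X * (of fun _ _ => 1 : Matrix ι ι ℝ) = 0 :=
    hX.mul_eq_zero_of_transpose_mul_eq_zero (mul_ones_eq_zero (by rwa [mulVec_transpose]))
  have hC : LinearMap.range C.mulVecLin ≤ LinearMap.range L.mulVecLin := by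
    rw [range_mulVecLin_eq_ker_of_vecMul_one_eq_zero hcol hrank]
    have hCcol : 1 ᵥ* C = 0 := by
      rw [vecMul_sub, vecMul_one, vecMul_smul, one_vecMul_ones, smul_smul,
        inv_mul_cancel₀ (by positivity), one_smul, sub_self]
    rintro _ ⟨v, rfl⟩
    simp [dotProduct_mulVec, hCcol]
  calc L * X = L * X * C := by
        rw [Matrix.mul_sub, Matrix.mul_one, Matrix.mul_smul, Matrix.mul_assoc, hXJ,
          Matrix.mul_zero, smul_zero, sub_zero]
    _ = C := mul_eq_of_mul_eq_self_of_range_le hX.1 hC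

end IsMoorePenrose

/-- For a weight-balanced loop-less Laplacian of a strongly connected directed graph and `γ ≠ 0`,
the Moore–Penrose pseudoinverse satisfies `L† = (L + (γ/n)J)⁻¹ - (1/(nγ))J`. -/
theorem pinv_eq_shifted_inverse {n : ℕ} (L X : Matrix (Fin n) (Fin n) ℝ)
    (hrow : L.mulVec 1 = 0) (hcol : Matrix.vecMul 1 L = 0)
    (hrank : L.rank = n - 1) (hX : IsMoorePenrose L X) (γ : ℝ) (hγ : γ ≠ 0) :
    X = (L + (γ / (n : ℝ)) • (Matrix.of fun _ _ => (1 : ℝ)))⁻¹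
        - (1 / ((n : ℝ) * γ)) • (Matrix.of fun _ _ => (1 : ℝ)) := by
  rcases n.eq_zero_or_pos with rfl | hn
  · exact Subsingleton.elim _ _
  have : Nonempty (Fin n) := ⟨⟨0, hn⟩⟩
  have hLX := hX.mul_eq_one_sub_ones hcol (by simpa using hrank)
  have hJX : (of fun _ _ => 1 : Matrix (Fin n) (Fin n) ℝ) * X = 0 :=
    hX.mul_eq_zero_of_mul_transpose_eq_zero (ones_mul_eq_zero (by rwa [vecMul_transpose]))
  have hinv : (L + (γ / n) • of fun _ _ => 1) * (X + (1 / (n * γ)) • of fun _ _ => 1) = 1 := by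
    rw [Matrix.add_mul, Matrix.mul_add, Matrix.mul_add, Matrix.mul_smul, Matrix.smul_mul,
      Matrix.smul_mul, Matrix.mul_smul, mul_ones_eq_zero hrow, hJX, ones_mul_ones, hLX,
      smul_smul, smul_smul, Fintype.card_fin]
    have hn' : (n : ℝ) ≠ 0 := by positivity
    rw [show γ / n * (1 / (n * γ)) * n = (n : ℝ)⁻¹ by field_simp]
    simp
  rw [inv_eq_right_inv hinv, add_sub_cancel_right]
end

section
/- For a weight-balanced loop-less Laplacian L of a strongly connected directed graph, the Moore–Penrose pseudoinverse satisfies L† L = L L† = Π_n, where Π_n = I_n − (1/n) 1_n 1_nᵀ is the orthogonal projection onto the orthogonal complement of the all-ones vector; consequently L† equals the group inverse of L. -/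
open Matrix

/-- Kernel of a rank `n-1` matrix annihilating `1` is spanned by `1`. -/
lemma ker_span {n : ℕ} (hn : 0 < n) (L : Matrix (Fin n) (Fin n) ℝ)
    (hrow : L.mulVec 1 = 0) (hrank : L.rank = n - 1)
    (v : Fin n → ℝ) (hv : L.mulVec v = 0) : ∃ c : ℝ, v = c • (1 : Fin n → ℝ)  := by
  have hone : (1 : Fin n → ℝ) ≠ 0 := by
    intro h
    have := congrFun h ⟨0, hn⟩
    simp at this
  have hle : (Submodule.span ℝ {(1 : Fin n → ℝ)}) ≤ LinearMap.ker L.mulVecLin := by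
    rw [Submodule.span_singleton_le_iff_mem]
    simpa [Matrix.mulVecLin] using hrow
  have hrn := LinearMap.finrank_range_add_finrank_ker L.mulVecLin
  have hfr : Module.finrank ℝ (Fin n → ℝ) = n := Module.finrank_fin_fun ℝ
  have hrk : Module.finrank ℝ (LinearMap.range L.mulVecLin) = n - 1 := hrank
  have hker : Module.finrank ℝ (LinearMap.ker L.mulVecLin) = 1 := by
    omega
  have hspan : Module.finrank ℝ (Submodule.span ℝ {(1 : Fin n → ℝ)}) = 1 :=
    finrank_span_singleton hone
  have heq : Submodule.span ℝ {(1 : Fin n → ℝ)} = LinearMap.ker L.mulVecLin :=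
    Submodule.eq_of_le_of_finrank_eq hle (by rw [hspan, hker])
  have hvmem : v ∈ Submodule.span ℝ {(1 : Fin n → ℝ)} := by
    rw [heq]
    simpa [Matrix.mulVecLin] using hv
  rcases Submodule.mem_span_singleton.mp hvmem with ⟨c, hc⟩
  exact ⟨c, hc.symm⟩

/-- Core lemma: `X * L = I - (1/n) J`. -/
lemma aux_proj {n : ℕ} (L X : Matrix (Fin n) (Fin n) ℝ)
    (hrow : L.mulVec 1 = 0) (hrank : L.rank = n - 1)
    (h1 : L * X * L = L) (h4 : (X * L)ᵀ = X * L) :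
    X * L = 1 - ((n : ℝ))⁻¹ • (Matrix.of fun _ _ => (1 : ℝ)) := by
  rcases Nat.eq_zero_or_pos n with hn0 | hn
  · subst hn0; ext i j; exact i.elim0
  set J : Matrix (Fin n) (Fin n) ℝ := Matrix.of fun _ _ => (1 : ℝ) with hJ
  set P : Matrix (Fin n) (Fin n) ℝ := X * L with hP
  have hnne : (n : ℝ) ≠ 0 := Nat.cast_ne_zero.mpr hn.ne'
  have hPP : P * P = P := by
    show (X * L) * (X * L) = X * L
    calc (X * L) * (X * L) = X * ((L * X) * L) := by simp only [Matrix.mul_assoc]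
      _ = X * L := by rw [h1]
  have hP1 : P.mulVec 1 = 0 := by
    rw [hP, ← Matrix.mulVec_mulVec, hrow, Matrix.mulVec_zero]
  have hLP : L * P = L := by
    rw [hP, ← Matrix.mul_assoc, h1]
  have hPJ : P * J = 0 := by
    ext i j
    have := congrFun hP1 i
    simpa [Matrix.mul_apply, Matrix.mulVec, dotProduct, hJ] using this
  have hJt : Jᵀ = J := by ext i j; simp [hJ]
  have hJP : J * P = 0 := by
    have h0 : (P * J)ᵀ = 0 := by rw [hPJ]; simp
    rw [Matrix.transpose_mul, hJt, hP] at h0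
    rw [← hP] at h0
    rw [h4] at h0
    exact h0
  have hJJ : J * J = (n : ℝ) • J := by
    ext i j
    simp [Matrix.mul_apply, hJ, Finset.sum_const]
  set M : Matrix (Fin n) (Fin n) ℝ := P + (n : ℝ)⁻¹ • J with hM
  have hMM : M * M = M := by
    rw [hM, Matrix.add_mul, Matrix.mul_add, Matrix.mul_add]
    rw [hPP, Matrix.mul_smul, hPJ, Matrix.smul_mul, hJP, Matrix.mul_smul,
      Matrix.smul_mul, hJJ]
    simp [smul_smul, inv_mul_cancel₀ hnne]
  have hker0 : ∀ v : Fin n → ℝ, M.mulVec v = 0 → v = 0 := by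
    intro v hv
    have hadd : P.mulVec v + (n : ℝ)⁻¹ • J.mulVec v = 0 := by
      rw [← Matrix.smul_mulVec, ← Matrix.add_mulVec, ← hM, hv]
    have hPv : P.mulVec v = 0 := by
      have := congrArg (P.mulVec) hadd
      rw [Matrix.mulVec_add, Matrix.mulVec_smul, Matrix.mulVec_mulVec,
        Matrix.mulVec_mulVec, hPP, hPJ, Matrix.mulVec_zero] at this
      simpa using this
    have hJv : J.mulVec v = 0 := by
      have : (n : ℝ)⁻¹ • J.mulVec v = 0 := by
        rw [← hadd, hPv]; simp
      have := congrArg (fun w => (n : ℝ) • w) this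
      simpa [smul_smul, mul_inv_cancel₀ hnne] using this
    have hLv : L.mulVec v = 0 := by
      have := congrArg (fun A : Matrix (Fin n) (Fin n) ℝ => A.mulVec v) hLP
      simp only [← Matrix.mulVec_mulVec] at this
      rw [hPv, Matrix.mulVec_zero] at this
      exact this.symm
    rcases ker_span hn L hrow hrank v hLv with ⟨c, hc⟩
    have hJ1 : J.mulVec (1 : Fin n → ℝ) = fun _ => (n : ℝ) := by
      ext i
      simp [Matrix.mulVec, dotProduct, hJ]
    have : c * (n : ℝ) = 0 := by
      have := congrFun hJv ⟨0, hn⟩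
      rw [hc, Matrix.mulVec_smul, hJ1] at this
      simpa using this
    have hc0 : c = 0 := by
      rcases mul_eq_zero.mp this with h | h
      · exact h
      · exact absurd h hnne
    rw [hc, hc0, zero_smul]
  have hMinj : Function.Injective M.mulVec := by
    intro u w huw
    have : M.mulVec (u - w) = 0 := by
      rw [Matrix.mulVec_sub, huw, sub_self]
    have := hker0 _ this
    exact sub_eq_zero.mp this
  have hMunit : IsUnit M := Matrix.mulVec_injective_iff_isUnit.mp hMinj
  have hM1 : M = 1 := by
    have : M * M = M * 1 := by rw [hMM, Matrix.mul_one]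
    exact hMunit.mul_left_cancel this
  exact eq_sub_of_add_eq (hM.symm.trans hM1)

/-- Group-inverse uniqueness, purely algebraic. -/
lemma group_inv_unique {n : ℕ} (L X D : Matrix (Fin n) (Fin n) ℝ)
    (hLXL : L * X * L = L) (hXLX : X * L * X = X) (hcX : L * X = X * L)
    (hD1 : L * D * L = L) (hD2 : D * L * D = D) (hcD : L * D = D * L) :
    D = X := by
  have hA : X * L = (X * L) * (D * L) := by
    calc X * L = X * (L * D * L) := by rw [hD1]
      _ = (X * L) * (D * L) := by simp only [Matrix.mul_assoc]
  have hB : L * D = (X * L) * (D * L) := by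
    calc L * D = (L * X * L) * D := by rw [hLXL]
      _ = L * X * (L * D) := by simp only [Matrix.mul_assoc]
      _ = X * L * (L * D) := by rw [hcX]
      _ = X * L * (D * L) := by rw [hcD]
  have hPQ : L * D = X * L := by rw [hB, ← hA]
  calc D = D * L * D := hD2.symm
    _ = D * (L * D) := by simp only [Matrix.mul_assoc]
    _ = D * (X * L) := by rw [hPQ]
    _ = D * (L * X) := by rw [hcX]
    _ = (D * L) * X := by simp only [Matrix.mul_assoc]
    _ = (L * D) * X := by rw [hcD]
    _ = (X * L) * X := by rw [hPQ]
    _ = X := hXLX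

/-- For a weight-balanced loop-less Laplacian of rank `n - 1`, the Moore–Penrose pseudoinverse
satisfies `L† L = L L† = Πₙ = I - (1/n) 𝟏 𝟏ᵀ`; consequently `L†` is the group inverse of `L`. -/
theorem pinv_mul_eq_proj {n : ℕ} (L X : Matrix (Fin n) (Fin n) ℝ)
    (hrow : L.mulVec 1 = 0) (hcol : Matrix.vecMul 1 L = 0)
    (hrank : L.rank = n - 1) (hX : IsMoorePenrose L X) :
    X * L = 1 - ((n : ℝ))⁻¹ • (Matrix.of fun _ _ => (1 : ℝ)) ∧
    L * X = 1 - ((n : ℝ))⁻¹ • (Matrix.of fun _ _ => (1 : ℝ)) ∧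
    (∀ D : Matrix (Fin n) (Fin n) ℝ,
      L * D * L = L → D * L * D = D → L * D = D * L → D = X) := by
  obtain ⟨h1, h2, h3, h4⟩ := hX
  have first : X * L = 1 - ((n : ℝ))⁻¹ • (Matrix.of fun _ _ => (1 : ℝ)) :=
    aux_proj L X hrow hrank h1 h4
  have hrow' : Lᵀ.mulVec 1 = 0 := by
    rw [Matrix.mulVec_transpose]; exact hcol
  have hrank' : Lᵀ.rank = n - 1 := by rw [Matrix.rank_transpose]; exact hrank
  have h1' : Lᵀ * Xᵀ * Lᵀ = Lᵀ := by
    rw [← Matrix.transpose_mul, ← Matrix.transpose_mul, ← Matrix.mul_assoc, h1]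
  have h4' : (Xᵀ * Lᵀ)ᵀ = Xᵀ * Lᵀ := by
    rw [← Matrix.transpose_mul, Matrix.transpose_transpose]
    exact h3.symm
  have htl : Xᵀ * Lᵀ = 1 - ((n : ℝ))⁻¹ • (Matrix.of fun _ _ => (1 : ℝ)) :=
    aux_proj Lᵀ Xᵀ hrow' hrank' h1' h4'
  have second : L * X = 1 - ((n : ℝ))⁻¹ • (Matrix.of fun _ _ => (1 : ℝ)) := by
    have := congrArg Matrix.transpose htl
    rw [Matrix.transpose_mul, Matrix.transpose_transpose, Matrix.transpose_transpose] at this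
    rw [this]
    ext i j
    simp [Matrix.transpose_apply, Matrix.sub_apply, Matrix.one_apply, eq_comm]
  refine ⟨first, second, ?_⟩
  intro D hD1 hD2 hcD
  exact group_inv_unique L X D h1 h2 (second.trans first.symm) hD1 hD2 hcD
end

section
/- Structure of the 2×2 Kron-reduced Laplacian: if L is a loop-less Laplacian of a directed graph and {a,b} is a reachable subset, then L/L[{a,b}ᶜ,{a,b}ᶜ] = [[c₁, −c₁], [−c₂, c₂]] for some nonnegative reals c₁, c₂; i.e., the off-diagonal entries equal the negatives of the corresponding diagonal entries. -/
open Matrix Finset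

-- row sum of interior block
lemma row_sum_interior {n : ℕ} (A : Matrix (Fin n) (Fin n) ℝ) (α : Finset (Fin n))
    (i : ↥(αᶜ : Finset (Fin n))) :
    ∑ l : ↥(αᶜ : Finset (Fin n)), looplessLap A ↑i ↑l = ∑ k ∈ α, A ↑i k := by
  rw [Finset.sum_coe_sort (αᶜ) (fun l => looplessLap A ↑i l)]
  have hi : (i : Fin n) ∈ (αᶜ : Finset (Fin n)) := i.2
  rw [← Finset.add_sum_erase _ _ hi]
  have h1 : looplessLap A ↑i ↑i = (∑ k, A ↑i k) - A ↑i ↑i := by simp [looplessLap]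
  have h2 : ∑ k ∈ (αᶜ : Finset (Fin n)).erase ↑i, looplessLap A ↑i k
      = -(∑ k ∈ (αᶜ : Finset (Fin n)).erase ↑i, A ↑i k) := by
    rw [← Finset.sum_neg_distrib]
    refine Finset.sum_congr rfl fun k hk => ?_
    have : ↑i ≠ k := fun h => (Finset.mem_erase.mp hk).1 h.symm
    simp only [looplessLap, Matrix.of_apply, if_neg this]
  have h3 : ∑ k ∈ (αᶜ : Finset (Fin n)).erase ↑i, A ↑i k
      = (∑ k ∈ (αᶜ : Finset (Fin n)), A ↑i k) - A ↑i ↑i := by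
    rw [Finset.sum_erase_eq_sub hi]
  have h4 : ∑ k ∈ α, A ↑i k + ∑ k ∈ (αᶜ : Finset (Fin n)), A ↑i k = ∑ k, A ↑i k :=
    Finset.sum_add_sum_compl α _
  rw [h1, h2, h3]
  linarith


lemma min_principle {n : ℕ} (A : Matrix (Fin n) (Fin n) ℝ) (hA : ∀ i j, 0 ≤ A i j)
    (α : Finset (Fin n)) (hreach : ReachableSubset A α)
    (x : ↥(αᶜ : Finset (Fin n)) → ℝ)
    (hx : ∀ i, 0 ≤ (subm (looplessLap A) αᶜ αᶜ).mulVec x i) :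
    ∀ i, 0 ≤ x i := by
  by_contra hcon
  push_neg at hcon
  obtain ⟨i₁, hi₁⟩ := hcon
  obtain ⟨i₀, -, hmin⟩ := Finset.exists_min_image Finset.univ x ⟨i₁, Finset.mem_univ _⟩
  set m := x i₀ with hm
  have hmlt : m < 0 := lt_of_le_of_lt (hmin i₁ (Finset.mem_univ _)) hi₁
  have hmle : ∀ l, m ≤ x l := fun l => hmin l (Finset.mem_univ _)
  -- key per-node facts at a minimizer
  have key : ∀ i : ↥(αᶜ : Finset (Fin n)), x i = m →
      (∀ k ∈ α, A ↑i k = 0) ∧ (∀ l : ↥(αᶜ : Finset (Fin n)), 0 < A ↑i ↑l → x l = m) := by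
    intro i hxi
    have hterm : ∀ l : ↥(αᶜ : Finset (Fin n)), l ∈ Finset.univ →
        looplessLap A ↑i ↑l * x l ≤ looplessLap A ↑i ↑l * m := by
      intro l _
      by_cases hl : l = i
      · subst hl; rw [hxi]
      · have hne : (↑i : Fin n) ≠ ↑l := fun h => hl (Subtype.coe_injective h.symm)
        have hL : looplessLap A ↑i ↑l = -A ↑i ↑l := by
          simp only [looplessLap, Matrix.of_apply, if_neg hne]
        rw [hL]
        nlinarith [hA ↑i ↑l, hmle l]
    have hsum_le : (subm (looplessLap A) αᶜ αᶜ).mulVec x i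
        ≤ (∑ k ∈ α, A ↑i k) * m := by
      have : (subm (looplessLap A) αᶜ αᶜ).mulVec x i
          = ∑ l : ↥(αᶜ : Finset (Fin n)), looplessLap A ↑i ↑l * x l := by
        simp [Matrix.mulVec, dotProduct, subm]
      rw [this, ← row_sum_interior A α i, Finset.sum_mul]
      exact Finset.sum_le_sum hterm
    have hS0 : (0:ℝ) ≤ ∑ k ∈ α, A ↑i k := Finset.sum_nonneg fun k _ => hA _ k
    have hle0 : (∑ k ∈ α, A ↑i k) * m ≤ 0 := mul_nonpos_of_nonneg_of_nonpos hS0 hmlt.le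
    have heq0 : (∑ k ∈ α, A ↑i k) * m = 0 := le_antisymm hle0 (le_trans (hx i) hsum_le)
    have hS : ∑ k ∈ α, A ↑i k = 0 := by
      rcases mul_eq_zero.mp heq0 with h | h
      · exact h
      · exact absurd h hmlt.ne
    constructor
    · intro k hk
      exact (Finset.sum_eq_zero_iff_of_nonneg (fun k _ => hA _ k)).mp hS k hk
    · -- termwise equality
      have hsum_eq : ∑ l : ↥(αᶜ : Finset (Fin n)), looplessLap A ↑i ↑l * x l
          = ∑ l : ↥(αᶜ : Finset (Fin n)), looplessLap A ↑i ↑l * m := by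
        have h1 : ∑ l : ↥(αᶜ : Finset (Fin n)), looplessLap A ↑i ↑l * m
            = (∑ k ∈ α, A ↑i k) * m := by rw [← row_sum_interior A α i, Finset.sum_mul]
        have h2 : (subm (looplessLap A) αᶜ αᶜ).mulVec x i
            = ∑ l : ↥(αᶜ : Finset (Fin n)), looplessLap A ↑i ↑l * x l := by
          simp [Matrix.mulVec, dotProduct, subm]
        have := hx i
        rw [h2] at this
        have hup : ∑ l : ↥(αᶜ : Finset (Fin n)), looplessLap A ↑i ↑l * x l
            ≤ ∑ l : ↥(αᶜ : Finset (Fin n)), looplessLap A ↑i ↑l * m :=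
          Finset.sum_le_sum hterm
        rw [h1]
        rw [h1] at hup
        linarith
      have hall := (Finset.sum_eq_sum_iff_of_le hterm).mp hsum_eq
      intro l hAl
      by_cases hl : l = i
      · subst hl; exact hxi
      · have hne : (↑i : Fin n) ≠ ↑l := fun h => hl (Subtype.coe_injective h.symm)
        have hL : looplessLap A ↑i ↑l = -A ↑i ↑l := by
          simp only [looplessLap, Matrix.of_apply, if_neg hne]
        have := hall l (Finset.mem_univ l)
        rw [hL] at this
        have hA0 : (-A ↑i ↑l : ℝ) ≠ 0 := neg_ne_zero.mpr (ne_of_gt hAl)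
        exact mul_left_cancel₀ hA0 this
  -- path contradiction
  obtain ⟨j, hj, hpath⟩ := hreach ↑i₀ (Finset.mem_compl.mp i₀.2)
  have main : ∀ u, Relation.ReflTransGen (fun u v => 0 < A u v) u j →
      ∀ hu : u ∈ (αᶜ : Finset (Fin n)), x ⟨u, hu⟩ = m → False := by
    intro u hp
    induction hp using Relation.ReflTransGen.head_induction_on with
    | refl => intro hu _; exact (Finset.mem_compl.mp hu) hj
    | head hedge _ ih =>
      rename_i u' c _
      intro hu hxu
      have hk := key ⟨u', hu⟩ hxu
      have hc : c ∈ (αᶜ : Finset (Fin n)) := by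
        rw [Finset.mem_compl]
        intro hcα
        exact absurd (hk.1 c hcα) (ne_of_gt hedge)
      exact ih hc (hk.2 ⟨c, hc⟩ hedge)
  exact main ↑i₀ hpath i₀.2 (by rw [Subtype.coe_eta])

lemma isUnit_interior {n : ℕ} (A : Matrix (Fin n) (Fin n) ℝ) (hA : ∀ i j, 0 ≤ A i j)
    (α : Finset (Fin n)) (hreach : ReachableSubset A α) :
    IsUnit (subm (looplessLap A) αᶜ αᶜ) := by
  rw [← Matrix.mulVec_injective_iff_isUnit]
  intro x y hxy
  have h1 : ∀ i, 0 ≤ (x - y) i := by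
    refine min_principle A hA α hreach _ fun i => ?_
    rw [Matrix.mulVec_sub, hxy]
    simp
  have h2 : ∀ i, 0 ≤ (y - x) i := by
    refine min_principle A hA α hreach _ fun i => ?_
    rw [Matrix.mulVec_sub, hxy]
    simp
  funext i
  have := h1 i; have := h2 i
  simp only [Pi.sub_apply] at *
  linarith

lemma inv_interior_nonneg {n : ℕ} (A : Matrix (Fin n) (Fin n) ℝ) (hA : ∀ i j, 0 ≤ A i j)
    (α : Finset (Fin n)) (hreach : ReachableSubset A α) :
    ∀ k l, 0 ≤ (subm (looplessLap A) αᶜ αᶜ)⁻¹ k l := by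
  intro k l
  have hu := isUnit_interior A hA α hreach
  have hdet := (Matrix.isUnit_iff_isUnit_det _).mp hu
  have hBB : subm (looplessLap A) αᶜ αᶜ * (subm (looplessLap A) αᶜ αᶜ)⁻¹ = 1 :=
    Matrix.mul_nonsing_inv _ hdet
  refine min_principle A hA α hreach (fun i => (subm (looplessLap A) αᶜ αᶜ)⁻¹ i l) (fun i => ?_) k
  have : (subm (looplessLap A) αᶜ αᶜ).mulVec (fun j => (subm (looplessLap A) αᶜ αᶜ)⁻¹ j l) i
      = (subm (looplessLap A) αᶜ αᶜ * (subm (looplessLap A) αᶜ αᶜ)⁻¹) i l := by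
    simp [Matrix.mulVec, dotProduct, Matrix.mul_apply]
  rw [this, hBB]
  by_cases h : i = l <;> simp [Matrix.one_apply, h]

lemma inv_mulVec_boundary {n : ℕ} (A : Matrix (Fin n) (Fin n) ℝ) (hA : ∀ i j, 0 ≤ A i j)
    (α : Finset (Fin n)) (hreach : ReachableSubset A α) (k : ↥(αᶜ : Finset (Fin n))) :
    ∑ l : ↥(αᶜ : Finset (Fin n)), (subm (looplessLap A) αᶜ αᶜ)⁻¹ k l * (∑ j ∈ α, A ↑l j) = 1 := by
  have hu := isUnit_interior A hA α hreach
  have hdet := (Matrix.isUnit_iff_isUnit_det _).mp hu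
  have h1 : (subm (looplessLap A) αᶜ αᶜ).mulVec (fun _ => 1)
      = fun l : ↥(αᶜ : Finset (Fin n)) => ∑ j ∈ α, A ↑l j := by
    funext l
    have : (subm (looplessLap A) αᶜ αᶜ).mulVec (fun _ => (1:ℝ)) l
        = ∑ l' : ↥(αᶜ : Finset (Fin n)), looplessLap A ↑l ↑l' := by
      simp [Matrix.mulVec, dotProduct, subm]
    rw [this, row_sum_interior A α l]
  have h2 : (subm (looplessLap A) αᶜ αᶜ)⁻¹.mulVec
      ((subm (looplessLap A) αᶜ αᶜ).mulVec (fun _ => 1)) = (fun _ => (1:ℝ)) := by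
    rw [Matrix.mulVec_mulVec, Matrix.nonsing_inv_mul _ hdet]
    simp [Matrix.one_mulVec]
  rw [h1] at h2
  have := congrFun h2 k
  simpa [Matrix.mulVec, dotProduct] using this

lemma schur_apply {ι : Type*} [Fintype ι] [DecidableEq ι]
    (M : Matrix ι ι ℝ) (α : Finset ι) (i j : ↥α) :
    schur M α i j = M ↑i ↑j -
      ∑ l : ↥(αᶜ : Finset ι), (∑ k : ↥(αᶜ : Finset ι), M ↑i ↑k * (subm M αᶜ αᶜ)⁻¹ k l) * M ↑l ↑j := by
  simp [schur, subm, Matrix.sub_apply, Matrix.mul_apply]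

lemma lap_offdiag {n : ℕ} (A : Matrix (Fin n) (Fin n) ℝ) {u v : Fin n} (huv : u ≠ v) :
    looplessLap A u v = -A u v := by
  simp only [looplessLap, Matrix.of_apply, if_neg huv]

lemma lap_row_sum {n : ℕ} (A : Matrix (Fin n) (Fin n) ℝ) (u : Fin n) :
    ∑ v, looplessLap A u v = 0 := by
  rw [← Finset.add_sum_erase _ _ (Finset.mem_univ u)]
  have h1 : looplessLap A u u = (∑ k, A u k) - A u u := by simp [looplessLap]
  have h2 : ∑ v ∈ Finset.univ.erase u, looplessLap A u v
      = -(∑ v ∈ Finset.univ.erase u, A u v) := by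
    rw [← Finset.sum_neg_distrib]
    refine Finset.sum_congr rfl fun v hv => ?_
    exact lap_offdiag A fun h => (Finset.mem_erase.mp hv).1 h.symm
  have h3 : ∑ v ∈ Finset.univ.erase u, A u v = (∑ v, A u v) - A u u :=
    Finset.sum_erase_eq_sub (Finset.mem_univ u)
  rw [h1, h2, h3]; ring

-- off-diagonal entries of the Schur complement are nonpositive
lemma schur_offdiag_nonpos {n : ℕ} (A : Matrix (Fin n) (Fin n) ℝ) (hA : ∀ i j, 0 ≤ A i j)
    (α : Finset (Fin n)) (hreach : ReachableSubset A α)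
    {u v : Fin n} (hu : u ∈ α) (hv : v ∈ α) (huv : u ≠ v) :
    schur (looplessLap A) α ⟨u, hu⟩ ⟨v, hv⟩ ≤ 0 := by
  rw [schur_apply]
  have hN := inv_interior_nonneg A hA α hreach
  have hsum : 0 ≤ ∑ l : ↥(αᶜ : Finset (Fin n)),
      (∑ k : ↥(αᶜ : Finset (Fin n)),
        looplessLap A u ↑k * (subm (looplessLap A) αᶜ αᶜ)⁻¹ k l) * looplessLap A ↑l v := by
    refine Finset.sum_nonneg fun l _ => ?_
    have hlv : looplessLap A ↑l v = -A ↑l v :=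
      lap_offdiag A fun h => (Finset.mem_compl.mp l.2) (h ▸ hv)
    have hk : ∀ k : ↥(αᶜ : Finset (Fin n)),
        looplessLap A u ↑k * (subm (looplessLap A) αᶜ αᶜ)⁻¹ k l ≤ 0 := by
      intro k
      have huk : looplessLap A u ↑k = -A u ↑k :=
        lap_offdiag A fun h => (Finset.mem_compl.mp k.2) (h ▸ hu)
      rw [huk]
      exact mul_nonpos_of_nonpos_of_nonneg (neg_nonpos.mpr (hA _ _)) (hN k l)
    have : (∑ k : ↥(αᶜ : Finset (Fin n)),
        looplessLap A u ↑k * (subm (looplessLap A) αᶜ αᶜ)⁻¹ k l) ≤ 0 :=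
      Finset.sum_nonpos fun k _ => hk k
    rw [hlv]
    nlinarith [hA ↑l v]
  have huv' : looplessLap A u v = -A u v := lap_offdiag A huv
  rw [huv']
  nlinarith [hA u v]

-- row sums of the 2x2 Schur complement vanish
lemma schur_pair_row {n : ℕ} (A : Matrix (Fin n) (Fin n) ℝ) (hA : ∀ i j, 0 ≤ A i j)
    (a b : Fin n) (hab : a ≠ b) (hreach : ReachableSubset A {a, b})
    {u : Fin n} (hu : u ∈ ({a, b} : Finset (Fin n)))
    (ha : a ∈ ({a, b} : Finset (Fin n))) (hb : b ∈ ({a, b} : Finset (Fin n))) :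
    schur (looplessLap A) {a, b} ⟨u, hu⟩ ⟨a, ha⟩ + schur (looplessLap A) {a, b} ⟨u, hu⟩ ⟨b, hb⟩ = 0 := by
  set α : Finset (Fin n) := {a, b} with hα
  set L := looplessLap A with hLdef
  set N := (subm L αᶜ αᶜ)⁻¹ with hN
  rw [schur_apply, schur_apply]
  have combine :
      (L u a - ∑ l : ↥(αᶜ : Finset (Fin n)), (∑ k : ↥(αᶜ : Finset (Fin n)), L u ↑k * N k l) * L ↑l a)
      + (L u b - ∑ l : ↥(αᶜ : Finset (Fin n)), (∑ k : ↥(αᶜ : Finset (Fin n)), L u ↑k * N k l) * L ↑l b)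
      = (L u a + L u b)
        - ∑ l : ↥(αᶜ : Finset (Fin n)), (∑ k : ↥(αᶜ : Finset (Fin n)), L u ↑k * N k l) * (L ↑l a + L ↑l b) := by
    have hc : ∑ l : ↥(αᶜ : Finset (Fin n)), (∑ k : ↥(αᶜ : Finset (Fin n)), L u ↑k * N k l) * L ↑l a
        + ∑ l : ↥(αᶜ : Finset (Fin n)), (∑ k : ↥(αᶜ : Finset (Fin n)), L u ↑k * N k l) * L ↑l b
        = ∑ l : ↥(αᶜ : Finset (Fin n)), (∑ k : ↥(αᶜ : Finset (Fin n)), L u ↑k * N k l) * (L ↑l a + L ↑l b) := by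
      rw [← Finset.sum_add_distrib]
      exact Finset.sum_congr rfl fun l _ => (mul_add _ _ _).symm
    linarith [hc]
  rw [combine]
  have hlsum : ∀ l : ↥(αᶜ : Finset (Fin n)), L ↑l a + L ↑l b = -(∑ j ∈ α, A ↑l j) := by
    intro l
    have h1 : L ↑l a = -A ↑l a := lap_offdiag A fun h => (Finset.mem_compl.mp l.2) (h ▸ ha)
    have h2 : L ↑l b = -A ↑l b := lap_offdiag A fun h => (Finset.mem_compl.mp l.2) (h ▸ hb)
    have hp : ∑ j ∈ α, A ↑l j = A ↑l a + A ↑l b := Finset.sum_pair hab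
    rw [h1, h2, hp]
    ring
  have hbig : ∑ l : ↥(αᶜ : Finset (Fin n)), (∑ k : ↥(αᶜ : Finset (Fin n)), L u ↑k * N k l) * (L ↑l a + L ↑l b)
      = -∑ k : ↥(αᶜ : Finset (Fin n)), L u ↑k := by
    have step1 : ∀ l : ↥(αᶜ : Finset (Fin n)),
        (∑ k : ↥(αᶜ : Finset (Fin n)), L u ↑k * N k l) * (L ↑l a + L ↑l b)
        = ∑ k : ↥(αᶜ : Finset (Fin n)), -(L u ↑k * (N k l * (∑ j ∈ α, A ↑l j))) := by
      intro l
      rw [hlsum l, Finset.sum_mul]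
      exact Finset.sum_congr rfl fun k _ => by ring
    calc ∑ l : ↥(αᶜ : Finset (Fin n)), (∑ k : ↥(αᶜ : Finset (Fin n)), L u ↑k * N k l) * (L ↑l a + L ↑l b)
        = ∑ l : ↥(αᶜ : Finset (Fin n)), ∑ k : ↥(αᶜ : Finset (Fin n)), -(L u ↑k * (N k l * (∑ j ∈ α, A ↑l j))) := by
          exact Finset.sum_congr rfl fun l _ => step1 l
      _ = ∑ k : ↥(αᶜ : Finset (Fin n)), ∑ l : ↥(αᶜ : Finset (Fin n)), -(L u ↑k * (N k l * (∑ j ∈ α, A ↑l j))) :=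
          Finset.sum_comm
      _ = ∑ k : ↥(αᶜ : Finset (Fin n)), -(L u ↑k * ∑ l : ↥(αᶜ : Finset (Fin n)), N k l * (∑ j ∈ α, A ↑l j)) := by
          refine Finset.sum_congr rfl fun k _ => ?_
          rw [Finset.mul_sum, ← Finset.sum_neg_distrib]

      _ = -∑ k : ↥(αᶜ : Finset (Fin n)), L u ↑k := by
          rw [← Finset.sum_neg_distrib]
          refine Finset.sum_congr rfl fun k _ => ?_
          rw [inv_mulVec_boundary A hA α hreach k, mul_one]
  rw [hbig]
  have hfin : ∑ k : ↥(αᶜ : Finset (Fin n)), L u ↑k = -(L u a + L u b) := by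
    rw [Finset.sum_coe_sort (αᶜ) (fun k => L u k)]
    have h4 : ∑ k ∈ α, L u k + ∑ k ∈ (αᶜ : Finset (Fin n)), L u k = ∑ k, L u k :=
      Finset.sum_add_sum_compl α _
    have h5 : ∑ k ∈ α, L u k = L u a + L u b := by rw [hα, Finset.sum_pair hab]
    have h6 : ∑ k, L u k = 0 := lap_row_sum A u
    linarith
  rw [hfin]
  ring

/-- Structure of the 2×2 Kron-reduced loop-less Laplacian: it equals `[[c₁, -c₁], [-c₂, c₂]]`
for some nonnegative reals `c₁, c₂`. -/
theorem two_node_kron_reduction_structure {n : ℕ} (A : Matrix (Fin n) (Fin n) ℝ)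
    (hA : ∀ i j, 0 ≤ A i j) (a b : Fin n) (hab : a ≠ b)
    (hreach : ReachableSubset A {a, b}) :
    ∃ c₁ c₂ : ℝ, 0 ≤ c₁ ∧ 0 ≤ c₂ ∧
      schur (looplessLap A) {a, b} ⟨a, Finset.mem_insert_self a {b}⟩ ⟨a, Finset.mem_insert_self a {b}⟩ = c₁ ∧
      schur (looplessLap A) {a, b} ⟨a, Finset.mem_insert_self a {b}⟩ ⟨b, Finset.mem_insert_of_mem (Finset.mem_singleton_self b)⟩ = -c₁ ∧
      schur (looplessLap A) {a, b} ⟨b, Finset.mem_insert_of_mem (Finset.mem_singleton_self b)⟩ ⟨a, Finset.mem_insert_self a {b}⟩ = -c₂ ∧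
      schur (looplessLap A) {a, b} ⟨b, Finset.mem_insert_of_mem (Finset.mem_singleton_self b)⟩ ⟨b, Finset.mem_insert_of_mem (Finset.mem_singleton_self b)⟩ = c₂ := by
  have ha : a ∈ ({a, b} : Finset (Fin n)) := Finset.mem_insert_self a {b}
  have hb : b ∈ ({a, b} : Finset (Fin n)) := Finset.mem_insert_of_mem (Finset.mem_singleton_self b)
  have hoffAB := schur_offdiag_nonpos A hA {a, b} hreach ha hb hab
  have hoffBA := schur_offdiag_nonpos A hA {a, b} hreach hb ha hab.symm
  have hrowA := schur_pair_row A hA a b hab hreach ha ha hb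
  have hrowB := schur_pair_row A hA a b hab hreach hb ha hb
  refine ⟨schur (looplessLap A) {a, b} ⟨a, ha⟩ ⟨a, ha⟩,
    schur (looplessLap A) {a, b} ⟨b, hb⟩ ⟨b, hb⟩,
    by linarith, by linarith, rfl, by linarith, by linarith, rfl⟩
end

section
/- Invariance of effective conductance under Kron reduction: let L be a loop-less Laplacian, {a,b} ⊂ α ⊊ [n] with {a,b} a reachable subset. Then (L/L[{a,b}ᶜ,{a,b}ᶜ])_{aa} = (L_red/L_red[{a,b}ᶜ∩α,{a,b}ᶜ∩α])_{aa}, where L_red = L/L[αᶜ,αᶜ]. -/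
open Matrix Finset

/-!
If `M[βᶜ,βᶜ]` is invertible, every boundary vector on `β` has a unique extension harmonic off `β`,
and on restrictions of such vectors the Schur complement `M/M[βᶜ,βᶜ]` acts as `M` itself. A vector
harmonic off `{a, b}` is harmonic off `α ⊇ {a, b}`, so its restriction to `α` is harmonic off
`{a, b}` for `L/L[αᶜ,αᶜ]`; applying both complements to the harmonic extension `v` of the indicator
of `a` shows that both sides equal `(L v) a`. The interior block of `L/L[αᶜ,αᶜ]` is invertible
because its kernel vectors extend to vectors harmonic off `{a, b}` and vanishing on `{a, b}`, which
are zero. The blocks `L[βᶜ,βᶜ]` are invertible by the maximum principle, since from every node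
outside `β` a path of positive edges leads into `β`.
-/

section Schur

variable {ι : Type*} [Fintype ι] [DecidableEq ι]

def glue (s : Finset ι) (x : s → ℝ) (y : ↥(sᶜ : Finset ι) → ℝ) : ι → ℝ :=
  fun k => if h : k ∈ s then x ⟨k, h⟩ else y ⟨k, mem_compl.2 h⟩

@[simp]
lemma glue_apply_of_mem (s : Finset ι) (x : s → ℝ) (y : ↥(sᶜ : Finset ι) → ℝ) (k : s) :
    glue s x y k = x k := by
  simp [glue]

@[simp]
lemma glue_apply_of_mem_compl (s : Finset ι) (x : s → ℝ) (y : ↥(sᶜ : Finset ι) → ℝ)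
    (k : ↥(sᶜ : Finset ι)) : glue s x y k = y k := by
  simp [glue, (mem_compl.1 k.2)]

lemma subm_mulVec_add_subm_mulVec (M : Matrix ι ι ℝ) (s t : Finset ι) (v : ι → ℝ) :
    subm M s t *ᵥ (fun k : t => v k) + subm M s tᶜ *ᵥ (fun k : ↥(tᶜ : Finset ι) => v k)
      = fun i : s => (M *ᵥ v) i := by
  ext i
  simp only [Pi.add_apply, mulVec, dotProduct, subm, of_apply]
  rw [sum_coe_sort t (fun k => M i k * v k), sum_coe_sort tᶜ (fun k => M i k * v k),
    sum_add_sum_compl]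

lemma subm_mulVec_eq (M : Matrix ι ι ℝ) (s t : Finset ι) (x : t → ℝ) :
    subm M s t *ᵥ x = fun i : s => (M *ᵥ glue t x 0) i := by
  rw [← subm_mulVec_add_subm_mulVec M s t]
  simp only [glue_apply_of_mem, glue_apply_of_mem_compl, Pi.zero_apply]
  rw [← Pi.zero_def, mulVec_zero, add_zero]

def IsHarmonicOff (M : Matrix ι ι ℝ) (β : Finset ι) (v : ι → ℝ) : Prop :=
  ∀ j ∉ β, (M *ᵥ v) j = 0

variable {M : Matrix ι ι ℝ} {β : Finset ι}

lemma IsHarmonicOff.schur_mulVec {v : ι → ℝ} (hv : IsHarmonicOff M β v)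
    (hinv : IsUnit (subm M βᶜ βᶜ).det) :
    schur M β *ᵥ (fun k : β => v k) = fun i : β => (M *ᵥ v) i := by
  have hint : subm M βᶜ β *ᵥ (fun k : β => v k)
      = -(subm M βᶜ βᶜ *ᵥ fun k : ↥(βᶜ : Finset ι) => v k) := by
    rw [eq_neg_iff_add_eq_zero, subm_mulVec_add_subm_mulVec]
    exact funext fun j => hv j (mem_compl.1 j.2)
  rw [schur, sub_mulVec, ← mulVec_mulVec, ← mulVec_mulVec, hint, mulVec_neg, mulVec_mulVec,
    nonsing_inv_mul _ hinv, one_mulVec, mulVec_neg, sub_neg_eq_add, subm_mulVec_add_subm_mulVec]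

lemma exists_isHarmonicOff_extension (hinv : IsUnit (subm M βᶜ βᶜ).det) (g : β → ℝ) :
    ∃ v : ι → ℝ, (fun k : β => v k) = g ∧ IsHarmonicOff M β v := by
  refine ⟨glue β g (-((subm M βᶜ βᶜ)⁻¹ *ᵥ subm M βᶜ β *ᵥ g)), by simp, fun j hj => ?_⟩
  have := subm_mulVec_add_subm_mulVec M βᶜ β
    (glue β g (-((subm M βᶜ βᶜ)⁻¹ *ᵥ subm M βᶜ β *ᵥ g)))
  simp only [glue_apply_of_mem, glue_apply_of_mem_compl] at this
  rw [mulVec_neg, mulVec_mulVec, mul_nonsing_inv _ hinv, one_mulVec, add_neg_cancel] at this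
  exact (congrFun this ⟨j, mem_compl.2 hj⟩).symm

lemma IsHarmonicOff.eq_zero {v : ι → ℝ} (hv : IsHarmonicOff M β v)
    (hinv : IsUnit (subm M βᶜ βᶜ).det) (hvβ : ∀ k ∈ β, v k = 0) : v = 0 := by
  have hcompl : subm M βᶜ βᶜ *ᵥ (fun k : ↥(βᶜ : Finset ι) => v k) = 0 := by
    have := subm_mulVec_add_subm_mulVec M βᶜ β v
    have h0 : (fun k : β => v k) = 0 := funext fun k => hvβ k k.2
    rw [h0, mulVec_zero, zero_add] at this
    rw [this]
    exact funext fun j => hv j (mem_compl.1 j.2)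
  rw [← mulVec_zero (subm M βᶜ βᶜ)] at hcompl
  have hcompl' := mulVec_injective_of_isUnit ((isUnit_iff_isUnit_det _).2 hinv) hcompl
  funext k
  by_cases hk : k ∈ β
  · exact hvβ k hk
  · exact congrFun hcompl' ⟨k, mem_compl.2 hk⟩

end Schur

section Quotient

variable {ι : Type*} [Fintype ι] [DecidableEq ι] {M : Matrix ι ι ℝ} {α β : Finset ι}
  {β' : Finset α}

lemma isUnit_det_subm_schur
    (hβα : β ⊆ α) (hβ' : ∀ k : α, k ∈ β' ↔ (k : ι) ∈ β)
    (hinvβ : IsUnit (subm M βᶜ βᶜ).det)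
    (hinvα : IsUnit (subm M αᶜ αᶜ).det) : IsUnit (subm (schur M α) β'ᶜ β'ᶜ).det := by
  rw [isUnit_iff_ne_zero]
  intro hdet
  obtain ⟨x, hx0, hx⟩ := exists_mulVec_eq_zero_iff.2 hdet
  obtain ⟨v, hvα, hv⟩ := exists_isHarmonicOff_extension hinvα (glue β'ᶜ x 0)
  have hvβ : ∀ k ∈ β, v k = 0 := fun k hk => by
    have hk' : (⟨k, hβα hk⟩ : α) ∉ β'ᶜ := by simpa [hβ'] using hk
    simpa [glue, hk'] using congrFun hvα ⟨k, hβα hk⟩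
  have hvharm : IsHarmonicOff M β v := fun j hj => by
    by_cases hjα : j ∈ α
    · have hj' : (⟨j, hjα⟩ : α) ∈ β'ᶜ := by simpa [hβ'] using hj
      have := congrFun (subm_mulVec_eq (schur M α) β'ᶜ β'ᶜ x) ⟨_, hj'⟩
      rw [hx, ← hvα, hv.schur_mulVec hinvα] at this
      exact this.symm
    · exact hv j hjα
  have hv0 := hvharm.eq_zero hinvβ hvβ
  refine hx0 (funext fun k => ?_)
  simpa [hv0] using (congrFun hvα k).symm

lemma IsHarmonicOff.schur_schur_mulVec {v : ι → ℝ} (hv : IsHarmonicOff M β v) (hβα : β ⊆ α)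
    (hβ' : ∀ k : α, k ∈ β' ↔ (k : ι) ∈ β) (hinvβ : IsUnit (subm M βᶜ βᶜ).det)
    (hinvα : IsUnit (subm M αᶜ αᶜ).det) :
    schur (schur M α) β' *ᵥ (fun k : β' => v k) = fun i : β' => (M *ᵥ v) i := by
  have hvα := IsHarmonicOff.schur_mulVec (fun j hj => hv j fun hjβ => hj (hβα hjβ)) hinvα
  have hvβ' : IsHarmonicOff (schur M α) β' fun k : α => v k := fun j hj => by
    rw [hvα]
    exact hv j (by rwa [← hβ'])
  rw [hvβ'.schur_mulVec (isUnit_det_subm_schur hβα hβ' hinvβ hinvα), hvα]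

theorem schur_apply_eq_schur_schur_apply (hβα : β ⊆ α) (hβ' : ∀ k : α, k ∈ β' ↔ (k : ι) ∈ β)
    (hinvβ : IsUnit (subm M βᶜ βᶜ).det)
    (hinvα : IsUnit (subm M αᶜ αᶜ).det) (i j : ι) (hi : i ∈ β) (hj : j ∈ β) :
    schur M β ⟨i, hi⟩ ⟨j, hj⟩
      = schur (schur M α) β' ⟨⟨i, hβα hi⟩, (hβ' _).2 hi⟩ ⟨⟨j, hβα hj⟩, (hβ' _).2 hj⟩ := by
  obtain ⟨v, hvβ, hv⟩ := exists_isHarmonicOff_extension hinvβ (Pi.single ⟨j, hj⟩ 1)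
  have hvβ' : (fun k : β' => v k) = Pi.single ⟨⟨j, hβα hj⟩, (hβ' _).2 hj⟩ 1 := by
    funext k
    have := congrFun hvβ ⟨k, (hβ' _).1 k.2⟩
    simp only [Pi.single_apply] at this ⊢
    simpa [Subtype.ext_iff] using this
  have lhs := congrFun (hv.schur_mulVec hinvβ) ⟨i, hi⟩
  have rhs := congrFun (hv.schur_schur_mulVec hβα hβ' hinvβ hinvα)
    ⟨⟨i, hβα hi⟩, (hβ' _).2 hi⟩
  rw [hvβ, mulVec_single_one] at lhs
  rw [hvβ', mulVec_single_one] at rhs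
  exact lhs.trans rhs.symm

end Quotient

section Laplacian

variable {n : ℕ} {A : Matrix (Fin n) (Fin n) ℝ}

lemma ReachableSubset.mono {β α : Finset (Fin n)} (h : ReachableSubset A β) (hβα : β ⊆ α) :
    ReachableSubset A α := fun i hi => by
  obtain ⟨j, hj, hij⟩ := h i fun hiβ => hi (hβα hiβ)
  exact ⟨j, hβα hj, hij⟩

lemma looplessLap_mulVec_apply (A : Matrix (Fin n) (Fin n) ℝ) (w : Fin n → ℝ) (i : Fin n) :
    (looplessLap A *ᵥ w) i = ∑ k, A i k * (w i - w k) := by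
  have hL : ∀ k, looplessLap A i k = (if i = k then ∑ m, A i m else 0) - A i k := fun k => by
    by_cases h : i = k <;> simp [looplessLap, h]
  simp only [mulVec, dotProduct, hL, sub_mul, ite_mul, zero_mul, sum_sub_distrib, sum_ite_eq,
    mem_univ, if_true, mul_sub, sum_mul]

lemma eq_of_reflTransGen_of_forall_le (hA : ∀ i j, 0 ≤ A i j) {w : Fin n → ℝ} {m : ℝ}
    (hle : ∀ k, w k ≤ m) (hharm : ∀ i, w i = m → (looplessLap A *ᵥ w) i = 0) {i j : Fin n}
    (hij : Relation.ReflTransGen (fun u v => 0 < A u v) i j) (hi : w i = m) : w j = m := by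
  induction hij with
  | refl => exact hi
  | @tail u v _ huv hu =>
    have hsum : ∑ k, A u k * (m - w k) = 0 := by
      rw [← hu, ← looplessLap_mulVec_apply, hharm u hu]
    have hterm := (sum_eq_zero_iff_of_nonneg fun k _ =>
      mul_nonneg (hA u k) (sub_nonneg.2 (hle k))).1 hsum v (mem_univ v)
    rcases mul_eq_zero.1 hterm with h | h
    · exact absurd h huv.ne'
    · linarith

lemma nonpos_of_isHarmonicOff_looplessLap (hA : ∀ i j, 0 ≤ A i j) {β : Finset (Fin n)}
    (hreach : ReachableSubset A β) {w : Fin n → ℝ} (hwβ : ∀ k ∈ β, w k = 0)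
    (hw : IsHarmonicOff (looplessLap A) β w) (k : Fin n) : w k ≤ 0 := by
  by_contra! hk
  have : Nonempty (Fin n) := ⟨k⟩
  obtain ⟨i, hi⟩ := Finite.exists_max w
  have hpos : 0 < w i := hk.trans_le (hi k)
  have hiβ : i ∉ β := fun h => hpos.ne' (hwβ i h)
  obtain ⟨j, hjβ, hij⟩ := hreach i hiβ
  have hharm : ∀ u, w u = w i → (looplessLap A *ᵥ w) u = 0 := fun u hu =>
    hw u fun huβ => hpos.ne' (hu ▸ hwβ u huβ)
  have hj := eq_of_reflTransGen_of_forall_le hA hi hharm hij rfl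
  exact hpos.ne' (hj ▸ hwβ j hjβ)

theorem isUnit_det_subm_looplessLap (hA : ∀ i j, 0 ≤ A i j) {β : Finset (Fin n)}
    (hreach : ReachableSubset A β) : IsUnit (subm (looplessLap A) βᶜ βᶜ).det := by
  rw [isUnit_iff_ne_zero]
  intro hdet
  obtain ⟨x, hx0, hx⟩ := exists_mulVec_eq_zero_iff.2 hdet
  have hwβ : ∀ k ∈ β, glue βᶜ x 0 k = 0 := fun k hk => by simp [glue, hk]
  have hw : IsHarmonicOff (looplessLap A) β (glue βᶜ x 0) := fun i hi => by
    simpa [hx] using (congrFun (subm_mulVec_eq (looplessLap A) βᶜ βᶜ x) ⟨i, mem_compl.2 hi⟩).symm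
  have hle := nonpos_of_isHarmonicOff_looplessLap hA hreach hwβ hw
  have hge := nonpos_of_isHarmonicOff_looplessLap hA hreach (w := -glue βᶜ x 0)
    (by simpa using hwβ) fun i hi => by simp [mulVec_neg, hw i hi]
  refine hx0 (funext fun k => ?_)
  simpa using le_antisymm (hle k) (neg_nonpos.1 (hge k))

end Laplacian

theorem effective_conductance_invariant_general {n : ℕ} (A : Matrix (Fin n) (Fin n) ℝ)
    (hA : ∀ i j, 0 ≤ A i j) (a b : Fin n)
    (α : Finset (Fin n)) (ha : a ∈ α) (hb : b ∈ α)
    (hreach : ReachableSubset A {a, b}) :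
    schur (looplessLap A) {a, b} ⟨a, Finset.mem_insert_self a {b}⟩ ⟨a, Finset.mem_insert_self a {b}⟩
      = schur (schur (looplessLap A) α) ({⟨a, ha⟩, ⟨b, hb⟩} : Finset ↥α)
          ⟨⟨a, ha⟩, Finset.mem_insert_self (⟨a, ha⟩ : ↥α) {⟨b, hb⟩}⟩
          ⟨⟨a, ha⟩, Finset.mem_insert_self (⟨a, ha⟩ : ↥α) {⟨b, hb⟩}⟩ := by
  have hβα : {a, b} ⊆ α := insert_subset ha (singleton_subset_iff.2 hb)
  have hβ' : ∀ k : α, k ∈ ({⟨a, ha⟩, ⟨b, hb⟩} : Finset α) ↔ (k : Fin n) ∈ ({a, b} : Finset _) :=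
    fun k => by simp [Subtype.ext_iff]
  exact schur_apply_eq_schur_schur_apply hβα hβ'
    (isUnit_det_subm_looplessLap hA hreach)
    (isUnit_det_subm_looplessLap hA (hreach.mono hβα)) a a (mem_insert_self a {b})
    (mem_insert_self a {b})

/-- Invariance of the effective conductance under Kron reduction: eliminating `αᶜ` first and
then reducing to `{a, b}` gives the same `(a, a)` entry as reducing to `{a, b}` directly. -/
theorem effective_conductance_invariant {n : ℕ} (A : Matrix (Fin n) (Fin n) ℝ)
    (hA : ∀ i j, 0 ≤ A i j) (a b : Fin n) (hab : a ≠ b)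
    (α : Finset (Fin n)) (ha : a ∈ α) (hb : b ∈ α) (hα : α ≠ Finset.univ)
    (hreach : ReachableSubset A {a, b}) :
    schur (looplessLap A) {a, b} ⟨a, Finset.mem_insert_self a {b}⟩ ⟨a, Finset.mem_insert_self a {b}⟩
      = schur (schur (looplessLap A) α) ({⟨a, ha⟩, ⟨b, hb⟩} : Finset ↥α)
          ⟨⟨a, ha⟩, Finset.mem_insert_self (⟨a, ha⟩ : ↥α) {⟨b, hb⟩}⟩
          ⟨⟨a, ha⟩, Finset.mem_insert_self (⟨a, ha⟩ : ↥α) {⟨b, hb⟩}⟩ :=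
  effective_conductance_invariant_general A hA a b α ha hb hreach
end

section
/- Effective resistance of a weight-balanced directed graph via pseudoinverse: let L be the loop-less Laplacian of a strongly connected weight-balanced directed graph. Then for distinct nodes a, b, the entry of the two-node Kron reduction satisfies (L/L[{a,b}ᶜ,{a,b}ᶜ])_{aa} = 1 / ((e_a − e_b)ᵀ L† (e_a − e_b)); equivalently, the effective resistance R(a,b) := 1/(L/L[{a,b}ᶜ,{a,b}ᶜ])_{aa} equals (e_a − e_b)ᵀ L† (e_a − e_b). -/
open Matrix Finset

private lemma step_lemma {n : ℕ} (L : Matrix (Fin n) (Fin n) ℝ)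
    (hZ : ∀ i j, i ≠ j → L i j ≤ 0) (z : Fin n → ℝ) (i : Fin n)
    (hmax : ∀ j, z j ≤ z i) (hrow : ∑ j, L i j = 0)
    (heq : ∑ j, L i j * z j = 0) :
    ∀ j, L i j < 0 → z j = z i := by
  have hsum : ∑ j, L i j * (z j - z i) = 0 := by
    simp only [mul_sub, Finset.sum_sub_distrib, heq, ← Finset.sum_mul, hrow, zero_mul, sub_zero]
  have hnn : ∀ j ∈ Finset.univ, (0:ℝ) ≤ L i j * (z j - z i) := by
    intro j _
    rcases eq_or_ne j i with rfl | hji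
    · simp
    · have h1 : L i j ≤ 0 := hZ i j hji.symm
      have h2 : z j - z i ≤ 0 := sub_nonpos.mpr (hmax j)
      nlinarith
  have hall := (Finset.sum_eq_zero_iff_of_nonneg hnn).1 hsum
  intro j hj
  have hz := hall j (Finset.mem_univ j)
  rcases mul_eq_zero.1 hz with h | h
  · exact absurd h (ne_of_lt hj)
  · linarith [sub_eq_zero.1 h]


private lemma ker_const {n : ℕ} (hn : 0 < n) (L : Matrix (Fin n) (Fin n) ℝ)
    (hZ : ∀ i j, i ≠ j → L i j ≤ 0) (hrow : L.mulVec 1 = 0)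
    (hconn : ∀ i j : Fin n, Relation.ReflTransGen (fun u v => L u v < 0) i j)
    (v : Fin n → ℝ) (hv : L.mulVec v = 0) : ∀ i j, v i = v j := by
  haveI : Nonempty (Fin n) := ⟨⟨0, hn⟩⟩
  obtain ⟨i0, hi0⟩ := Finite.exists_max v
  have hrow' : ∀ i, ∑ j, L i j = 0 := by
    intro i
    have := congrFun hrow i
    simpa [Matrix.mulVec, dotProduct] using this
  have hv' : ∀ i, ∑ j, L i j * v j = 0 := by
    intro i
    have := congrFun hv i
    simpa [Matrix.mulVec, dotProduct] using this
  have key : ∀ j, Relation.ReflTransGen (fun u w => L u w < 0) i0 j → v j = v i0 := by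
    intro j h
    induction h with
    | refl => rfl
    | @tail p q hp hedge ih =>
      have hmaxp : ∀ k, v k ≤ v p := fun k => ih ▸ hi0 k
      have := step_lemma L hZ v p hmaxp (hrow' p) (hv' p) q hedge
      rw [this, ih]
  intro i j
  rw [key i (hconn i0 i), key j (hconn i0 j)]

private lemma grounded_det_isUnit {n : ℕ} (L : Matrix (Fin n) (Fin n) ℝ)
    (hZ : ∀ i j, i ≠ j → L i j ≤ 0) (hrow : L.mulVec 1 = 0)
    (hconn : ∀ i j : Fin n, Relation.ReflTransGen (fun u v => L u v < 0) i j)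
    (α : Finset (Fin n)) (a : Fin n) (ha : a ∈ α) :
    IsUnit (subm L αᶜ αᶜ).det := by
  rw [isUnit_iff_ne_zero]
  intro hdet
  obtain ⟨y, hy0, hy⟩ := (Matrix.exists_mulVec_eq_zero_iff).2 hdet
  classical
  have hrow' : ∀ i, ∑ j, L i j = 0 := by
    intro i
    have := congrFun hrow i
    simpa [Matrix.mulVec, dotProduct] using this
  set z : Fin n → ℝ := fun j => if h : j ∈ αᶜ then y ⟨j, h⟩ else 0 with hz
  have hzcoe : ∀ (k : ↥(αᶜ : Finset (Fin n))), z ↑k = y k := by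
    intro k
    rw [hz]
    simp only [k.2, dif_pos]
  -- the equation ∑ j, L i j * z j = 0 for i ∈ αᶜ
  have heqz : ∀ i, i ∈ αᶜ → ∑ j, L i j * z j = 0 := by
    intro i hi
    have hsplit : ∑ j, L i j * z j = ∑ j ∈ αᶜ, L i j * z j + ∑ j ∈ (αᶜ)ᶜ, L i j * z j :=
      (Finset.sum_add_sum_compl _ _).symm
    have h2 : ∑ j ∈ (αᶜ)ᶜ, L i j * z j = 0 := by
      apply Finset.sum_eq_zero
      intro j hj
      have hmem : j ∉ αᶜ := by simpa using hj
      have hz0 : z j = 0 := by rw [hz]; exact dif_neg hmem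
      rw [hz0, mul_zero]
    have h1 : ∑ j ∈ αᶜ, L i j * z j = 0 := by
      have hc : ∑ j ∈ αᶜ, L i j * z j = ∑ k : ↥(αᶜ : Finset (Fin n)), L i ↑k * z ↑k :=
        (Finset.sum_coe_sort _ _).symm
      have := congrFun hy ⟨i, hi⟩
      rw [hc]
      simp only [hzcoe]
      simpa [subm, Matrix.mulVec, dotProduct] using this
    rw [hsplit, h1, h2, add_zero]
  -- choose maximizer of |z|
  haveI : Nonempty (Fin n) := ⟨a⟩
  obtain ⟨i1, hi1⟩ := Finite.exists_max (fun j => |z j|)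
  have hMpos : 0 < |z i1| := by
    have : ∃ k : ↥(αᶜ : Finset (Fin n)), y k ≠ 0 := by
      by_contra h
      push_neg at h
      exact hy0 (funext fun k => h k)
    obtain ⟨k, hk⟩ := this
    have : z ↑k ≠ 0 := by rw [hzcoe]; exact hk
    calc 0 < |z ↑k| := abs_pos.mpr this
      _ ≤ |z i1| := hi1 ↑k
  set w : Fin n → ℝ := if 0 ≤ z i1 then z else -z with hwdef
  have hw1 : w i1 = |z i1| := by
    rw [hwdef]
    split
    · rw [abs_of_nonneg ‹_›]
    · simp only [Pi.neg_apply]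
      rw [abs_of_neg (lt_of_not_ge ‹_›)]
  have hwabs : ∀ j, |w j| = |z j| := by
    intro j
    rw [hwdef]; split <;> simp
  have hwmax : ∀ j, w j ≤ w i1 := by
    intro j
    calc w j ≤ |w j| := le_abs_self _
      _ = |z j| := hwabs j
      _ ≤ |z i1| := hi1 j
      _ = w i1 := hw1.symm
  have heqw : ∀ i, i ∈ αᶜ → ∑ j, L i j * w j = 0 := by
    intro i hi
    rw [hwdef]
    split
    · exact heqz i hi
    · simp only [Pi.neg_apply, mul_neg, Finset.sum_neg_distrib]
      rw [heqz i hi, neg_zero]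
  have hwzero : ∀ j, j ∉ αᶜ → w j = 0 := by
    intro j hj
    have hz0 : z j = 0 := by rw [hz]; exact dif_neg hj
    rw [hwdef]; split <;> simp [hz0]
  -- reachability invariant
  have key : ∀ j, Relation.ReflTransGen (fun u v => L u v < 0) i1 j → w j = w i1 := by
    intro j h
    induction h with
    | refl => rfl
    | @tail p q hp hedge ih =>
      have hpmem : p ∈ αᶜ := by
        by_contra hpn
        have := hwzero p hpn
        rw [ih, hw1] at this
        exact absurd this (ne_of_gt hMpos)
      have hmaxp : ∀ k, w k ≤ w p := fun k => ih ▸ hwmax k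
      have := step_lemma L hZ w p hmaxp (hrow' p) (heqw p hpmem) q hedge
      rw [this, ih]
  have ha' := key a (hconn i1 a)
  have : w a = 0 := hwzero a (by simp [ha])
  rw [ha', hw1] at this
  exact absurd this (ne_of_gt hMpos)

/-- Effective resistance of a strongly connected weight-balanced directed graph via the
pseudoinverse: `(L/L[{a,b}ᶜ,{a,b}ᶜ])ₐₐ = 1 / ((eₐ - e_b)ᵀ L† (eₐ - e_b))`. -/
theorem effective_conductance_eq_inv_quadratic_form {n : ℕ}
    (L X : Matrix (Fin n) (Fin n) ℝ)
    (hZ : ∀ i j, i ≠ j → L i j ≤ 0)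
    (hrow : L.mulVec 1 = 0) (hcol : Matrix.vecMul 1 L = 0)
    (hconn : ∀ i j : Fin n, Relation.ReflTransGen (fun u v => L u v < 0) i j)
    (hX : IsMoorePenrose L X) (a b : Fin n) (hab : a ≠ b) :
    schur L {a, b} ⟨a, Finset.mem_insert_self a {b}⟩ ⟨a, Finset.mem_insert_self a {b}⟩
      = 1 / ((Pi.single a 1 - Pi.single b 1) ⬝ᵥ
              X.mulVec (Pi.single a 1 - Pi.single b 1)) := by
  classical
  obtain ⟨h1, h2, h3, h4⟩ := hX
  have hn : 0 < n := a.pos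
  set d : Fin n → ℝ := Pi.single a 1 - Pi.single b 1 with hd
  set u : Fin n → ℝ := X.mulVec d with hu
  have hrow' : ∀ i, ∑ j, L i j = 0 := by
    intro i
    have := congrFun hrow i
    simpa [Matrix.mulVec, dotProduct] using this
  -- transpose facts
  have hZT : ∀ i j : Fin n, i ≠ j → Lᵀ i j ≤ 0 := fun i j h => hZ j i h.symm
  have hLTrow : Lᵀ.mulVec 1 = 0 := by
    funext i
    have := congrFun hcol i
    simpa [Matrix.mulVec, Matrix.vecMul, dotProduct, Matrix.transpose_apply] using this
  have hconnT : ∀ i j : Fin n, Relation.ReflTransGen (fun u v => Lᵀ u v < 0) i j := by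
    intro i j
    exact Relation.reflTransGen_swap.mpr (hconn j i)
  -- Step A : L *ᵥ u = d
  have hmatT : Lᵀ * (L * X) = Lᵀ := by
    calc Lᵀ * (L * X) = Lᵀ * (L * X)ᵀ := by rw [h3]
      _ = (L * X * L)ᵀ := by rw [Matrix.transpose_mul (L * X) L]
      _ = Lᵀ := by rw [h1]
  set w : Fin n → ℝ := d - (L * X).mulVec d with hw
  have hLTw : Lᵀ.mulVec w = 0 := by
    rw [hw, Matrix.mulVec_sub, Matrix.mulVec_mulVec, hmatT, sub_self]
  have hwconst := ker_const hn Lᵀ hZT hLTrow hconnT w hLTw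
  have hsumd : ∑ j, d j = 0 := by
    rw [hd]
    simp [Pi.single_apply, Finset.sum_sub_distrib]
  have hsumP : ∑ j, ((L * X).mulVec d) j = 0 := by
    have e1 : ∑ j, ((L * X).mulVec d) j = (1 : Fin n → ℝ) ⬝ᵥ ((L * X).mulVec d) := by
      simp [dotProduct]
    rw [e1, Matrix.dotProduct_mulVec, ← Matrix.vecMul_vecMul, hcol, Matrix.zero_vecMul,
      zero_dotProduct]
  have hsumw : ∑ j, w j = 0 := by
    rw [hw]
    simp only [Pi.sub_apply, Finset.sum_sub_distrib, hsumd, hsumP, sub_zero]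
  have hw0 : ∀ j, w j = 0 := by
    intro j
    have hc : ∑ k, w k = (n : ℝ) * w j := by
      rw [Finset.sum_congr rfl (fun k _ => hwconst k j)]
      simp [Finset.card_univ, mul_comm]
    rw [hsumw] at hc
    have hnn : (n : ℝ) ≠ 0 := Nat.cast_ne_zero.mpr hn.ne'
    exact (mul_eq_zero.1 hc.symm).resolve_left hnn
  have hPd : (L * X).mulVec d = d := by
    funext j
    have := hw0 j
    rw [hw] at this
    simp only [Pi.sub_apply, sub_eq_zero] at this
    exact this.symm
  have hLu : L.mulVec u = d := by
    rw [hu, Matrix.mulVec_mulVec, hPd]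
  -- the Finset {a, b}
  set α : Finset (Fin n) := {a, b} with hα
  have haα : a ∈ α := Finset.mem_insert_self a {b}
  have hbα : b ∈ α := Finset.mem_insert_of_mem (Finset.mem_singleton_self b)
  have hD : IsUnit (subm L αᶜ αᶜ).det := grounded_det_isUnit L hZ hrow hconn α a haα
  -- key row identity for the Schur complement
  have key : ∀ v : Fin n → ℝ, (∀ i, i ∈ αᶜ → ∑ j, L i j * v j = 0) →
      ∀ k : ↥α, (schur L α).mulVec (fun t => v ↑t) k = ∑ j, L ↑k j * v j := by
    intro v hv k
    set vα : ↥α → ℝ := fun t => v ↑t with hvα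
    set vβ : ↥(αᶜ : Finset (Fin n)) → ℝ := fun t => v ↑t with hvβ
    have hsplit : ∀ i : Fin n,
        ∑ j, L i j * v j
          = (∑ t : ↥α, L i ↑t * v ↑t) + ∑ t : ↥(αᶜ : Finset (Fin n)), L i ↑t * v ↑t := by
      intro i
      rw [Finset.sum_coe_sort α (fun j => L i j * v j),
        Finset.sum_coe_sort αᶜ (fun j => L i j * v j), Finset.sum_add_sum_compl]
    have hCD : (subm L αᶜ αᶜ).mulVec vβ = -((subm L αᶜ α).mulVec vα) := by
      funext i
      have h0 := hv ↑i i.2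
      rw [hsplit ↑i] at h0
      have e1 : (subm L αᶜ αᶜ).mulVec vβ i = ∑ t : ↥(αᶜ : Finset (Fin n)), L ↑i ↑t * v ↑t := rfl
      have e2 : (subm L αᶜ α).mulVec vα i = ∑ t : ↥α, L ↑i ↑t * v ↑t := rfl
      rw [Pi.neg_apply, e1, e2]
      linarith
    have hinv : (subm L αᶜ αᶜ)⁻¹.mulVec ((subm L αᶜ α).mulVec vα) = -vβ := by
      have hCv : (subm L αᶜ α).mulVec vα = -((subm L αᶜ αᶜ).mulVec vβ) := by
        rw [hCD, neg_neg]
      rw [hCv, Matrix.mulVec_neg, Matrix.mulVec_mulVec, Matrix.nonsing_inv_mul _ hD,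
        Matrix.one_mulVec]
    have hSk : (schur L α).mulVec vα k
        = (subm L α α).mulVec vα k
          - (subm L α αᶜ * (subm L αᶜ αᶜ)⁻¹ * subm L αᶜ α).mulVec vα k := by
      rw [schur, Matrix.sub_mulVec]
      rfl
    have hBDC : (subm L α αᶜ * (subm L αᶜ αᶜ)⁻¹ * subm L αᶜ α).mulVec vα
        = -((subm L α αᶜ).mulVec vβ) := by
      rw [← Matrix.mulVec_mulVec, ← Matrix.mulVec_mulVec, hinv, Matrix.mulVec_neg]
    have e3 : (subm L α α).mulVec vα k = ∑ t : ↥α, L ↑k ↑t * v ↑t := rfl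
    have e4 : (subm L α αᶜ).mulVec vβ k = ∑ t : ↥(αᶜ : Finset (Fin n)), L ↑k ↑t * v ↑t := rfl
    rw [hSk, hBDC, hsplit ↑k, Pi.neg_apply, e3, e4]
    ring
  have hvu : ∀ i, i ∈ αᶜ → ∑ j, L i j * u j = 0 := by
    intro i hi
    rw [Finset.mem_compl, hα, Finset.mem_insert, Finset.mem_singleton] at hi
    push_neg at hi
    have hdi : d i = 0 := by
      rw [hd]
      simp [Pi.single_eq_of_ne hi.1, Pi.single_eq_of_ne hi.2]
    calc ∑ j, L i j * u j = (L.mulVec u) i := rfl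
      _ = d i := congrFun hLu i
      _ = 0 := hdi
  have hv1 : ∀ i, i ∈ αᶜ → ∑ j, L i j * (1 : Fin n → ℝ) j = 0 := by
    intro i _
    simpa using hrow' i
  set a' : ↥α := ⟨a, haα⟩ with ha'
  set b' : ↥α := ⟨b, hbα⟩ with hb'
  have hab' : a' ≠ b' := fun h => hab (congrArg Subtype.val h)
  have huniv : (Finset.univ : Finset ↥α) = {a', b'} := by
    ext k
    simp only [Finset.mem_univ, true_iff, Finset.mem_insert, Finset.mem_singleton, ha', hb',
      Subtype.ext_iff]
    have hk2 : (↑k : Fin n) ∈ ({a, b} : Finset (Fin n)) := k.2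
    rw [Finset.mem_insert, Finset.mem_singleton] at hk2
    exact hk2
  have hmulexp : ∀ x : ↥α → ℝ, (schur L α).mulVec x a'
      = schur L α a' a' * x a' + schur L α a' b' * x b' := by
    intro x
    show ∑ k : ↥α, schur L α a' k * x k = _
    rw [huniv, Finset.sum_pair hab']
  have equ := key u hvu a'
  have eq1 := key 1 hv1 a'
  rw [hmulexp] at equ eq1
  have hrhs_u : ∑ j, L ↑a' j * u j = 1 := by
    calc ∑ j, L ↑a' j * u j = (L.mulVec u) a := rfl
      _ = d a := congrFun hLu a
      _ = 1 := by
          rw [hd]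
          simp [Pi.single_apply, hab]
  have hrhs_1 : ∑ j, L ↑a' j * (1 : Fin n → ℝ) j = 0 := by simpa using hrow' a
  rw [hrhs_u] at equ
  rw [hrhs_1] at eq1
  have hduv : d ⬝ᵥ u = u a - u b := by
    rw [hd, sub_dotProduct, single_dotProduct, single_dotProduct]
    ring
  have hfin : schur L α a' a' * (d ⬝ᵥ u) = 1 := by
    rw [hduv]
    have hua : u ↑a' = u a := rfl
    have hub : u ↑b' = u b := rfl
    rw [hua, hub] at equ
    simp only [Pi.one_apply, mul_one] at eq1
    have ht : schur L α a' b' = -schur L α a' a' := by linarith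
    rw [ht] at equ
    linear_combination equ
  exact eq_one_div_of_mul_eq_one_left hfin
end

section
/- Effective resistance is symmetric for weight-balanced graphs: if L is the loop-less Laplacian of a strongly connected weight-balanced directed graph, then the 2×2 Kron-reduced matrix L/L[{a,b}ᶜ,{a,b}ᶜ] has equal diagonal entries; i.e., the effective conductance from a to b equals that from b to a. -/
open Matrix Finset

/-- For a strongly connected weight-balanced loop-less Laplacian, the 2×2 Kron-reduced matrix
has equal diagonal entries: the effective conductance from `a` to `b` equals that from `b` to `a`. -/
theorem effective_conductance_symm {n : ℕ} (L : Matrix (Fin n) (Fin n) ℝ)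
    (hZ : ∀ i j, i ≠ j → L i j ≤ 0)
    (hrow : L.mulVec 1 = 0) (hcol : Matrix.vecMul 1 L = 0)
    (hconn : ∀ i j : Fin n, Relation.ReflTransGen (fun u v => L u v < 0) i j)
    (a b : Fin n) (hab : a ≠ b) :
    schur L {a, b} ⟨a, Finset.mem_insert_self a {b}⟩ ⟨a, Finset.mem_insert_self a {b}⟩ = schur L {a, b} ⟨b, Finset.mem_insert_of_mem (Finset.mem_singleton_self b)⟩ ⟨b, Finset.mem_insert_of_mem (Finset.mem_singleton_self b)⟩ := by
  set α : Finset (Fin n) := {a, b} with hα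
  set β : Finset (Fin n) := αᶜ with hβ
  have ha : a ∈ α := Finset.mem_insert_self a {b}
  have hb : b ∈ α := Finset.mem_insert_of_mem (Finset.mem_singleton_self b)
  have hrowsum : ∀ i, ∑ j, L i j = 0 := by
    intro i
    have := congrFun hrow i
    simpa [Matrix.mulVec, dotProduct] using this
  have hcolsum : ∀ j, ∑ i, L i j = 0 := by
    intro j
    have := congrFun hcol j
    simpa [Matrix.vecMul, dotProduct] using this
  set D : Matrix β β ℝ := subm L β β with hD
  -- Step 1: D is invertible
  have hDdet : IsUnit D.det := by
    rw [isUnit_iff_ne_zero]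
    intro hdet
    obtain ⟨v, hv0, hDv⟩ := Matrix.exists_mulVec_eq_zero_iff.mpr hdet
    set x : Fin n → ℝ := fun i => if h : i ∈ β then v ⟨i, h⟩ else 0 with hx
    have hxβ : ∀ (j : β), x ↑j = v j := by
      intro j; simp [hx, j.2]
    have hxα : ∀ i ∈ α, x i = 0 := by
      intro i hi
      have : i ∉ β := by simp [hβ, hi]
      simp [hx, this]
    have heq : ∀ i ∈ β, ∑ j, L i j * x j = 0 := by
      intro i hi
      have h1 := congrFun hDv ⟨i, hi⟩
      have h2 : D.mulVec v ⟨i, hi⟩ = ∑ j : β, L i ↑j * v j := by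
        simp [Matrix.mulVec, dotProduct, hD, subm]
      rw [← Finset.sum_add_sum_compl β (fun j => L i j * x j)]
      have h3 : ∑ j ∈ βᶜ, L i j * x j = 0 := by
        apply Finset.sum_eq_zero
        intro j hj
        have : j ∉ β := Finset.mem_compl.mp hj
        simp [hx, this]
      have h4 : ∑ j ∈ β, L i j * x j = ∑ j : β, L i ↑j * v j := by
        rw [← Finset.sum_coe_sort β (fun j => L i j * x j)]
        exact Finset.sum_congr rfl fun j _ => by rw [hxβ j]
      rw [h3, h4, ← h2, h1, add_zero]
      rfl
    -- maximum argument
    obtain ⟨k0, hk0⟩ := Function.ne_iff.mp hv0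
    obtain ⟨i0, _, hmax⟩ := Finset.exists_max_image Finset.univ (fun i => |x i|)
      ⟨a, Finset.mem_univ a⟩
    set M : ℝ := |x i0| with hM
    have hMpos : 0 < M := by
      have h5 : x ↑k0 ≠ 0 := by rw [hxβ k0]; simpa using hk0
      have h6 := hmax ↑k0 (Finset.mem_univ _)
      have h7 := abs_pos.mpr h5
      simp only [hM]; linarith
    set ε : ℝ := if 0 ≤ x i0 then 1 else -1 with hε
    set y : Fin n → ℝ := fun i => ε * x i with hy
    have hyi0 : y i0 = M := by
      rcases le_or_gt 0 (x i0) with h | h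
      · simp [hy, hε, if_pos h, hM, abs_of_nonneg h]
      · simp [hy, hε, if_neg (not_le.mpr h), hM, abs_of_neg h]
    have hyle : ∀ i, y i ≤ M := by
      intro i
      have h1 : |y i| = |x i| := by
        rcases le_or_gt 0 (x i0) with h | h <;>
          simp [hy, hε, h, not_le.mpr, abs_mul]
      have h2 := hmax i (Finset.mem_univ i)
      calc y i ≤ |y i| := le_abs_self _
        _ = |x i| := h1
        _ ≤ M := h2
    have hyα : ∀ i ∈ α, y i = 0 := by
      intro i hi; simp [hy, hxα i hi]
    have hyeq : ∀ i ∈ β, ∑ j, L i j * y j = 0 := by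
      intro i hi
      have : ∑ j, L i j * y j = ε * ∑ j, L i j * x j := by
        rw [Finset.mul_sum]
        exact Finset.sum_congr rfl fun j _ => by simp only [hy]; ring
      rw [this, heq i hi, mul_zero]
    have key : ∀ i, y i = M → ∀ j, L i j < 0 → y j = M := by
      intro i hiM j hLij
      have hiβ : i ∈ β := by
        by_contra hi
        have h8 : i ∈ α := by simpa [hβ] using hi
        have := hyα i h8
        rw [this] at hiM
        linarith
      by_cases hji : j = i
      · rw [hji]; exact hiM
      have h1 : ∑ k, L i k * (M - y k) = 0 := by
        have h9 : ∑ k, L i k * (M - y k) = (∑ k, L i k) * M - ∑ k, L i k * y k := by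
          rw [Finset.sum_mul, ← Finset.sum_sub_distrib]
          exact Finset.sum_congr rfl fun k _ => by ring
        rw [h9, hrowsum i, hyeq i hiβ]; ring
      have h2 : ∑ k ∈ Finset.univ.erase i, L i k * (M - y k) = 0 := by
        have h0 := Finset.add_sum_erase Finset.univ (fun k => L i k * (M - y k))
          (Finset.mem_univ i)
        have h5 : L i i * (M - y i) = 0 := by rw [hiM]; ring
        simp only [h5, zero_add] at h0
        rw [h0, h1]
      have h3 : ∀ k ∈ Finset.univ.erase i, L i k * (M - y k) ≤ 0 := by
        intro k hk
        have hki : k ≠ i := Finset.ne_of_mem_erase hk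
        have hZk := hZ i k (Ne.symm hki)
        have hyk := hyle k
        nlinarith
      have h4 := (Finset.sum_eq_zero_iff_of_nonpos h3).mp h2 j
        (Finset.mem_erase.mpr ⟨hji, Finset.mem_univ j⟩)
      rcases mul_eq_zero.mp h4 with h | h
      · linarith
      · linarith
    have hprop : ∀ c, Relation.ReflTransGen (fun u v => L u v < 0) i0 c → y c = M := by
      intro c h
      induction h with
      | refl => exact hyi0
      | tail _ step ih => exact key _ ih _ step
    have hyaM : y a = M := hprop a (hconn i0 a)
    have hya0 := hyα a ha
    rw [hya0] at hyaM
    linarith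
  set Di : Matrix β β ℝ := D⁻¹ with hDi
  set G : Fin n → Fin n → ℝ :=
    fun i j => L i j - ∑ k : β, ∑ l : β, L i ↑k * Di k l * L ↑l j with hGdef
  have hG : ∀ i j (hi : i ∈ α) (hj : j ∈ α),
      schur L α ⟨i, hi⟩ ⟨j, hj⟩ = G i j := by
    intro i j hi hj
    simp only [schur, subm, Matrix.sub_apply, Matrix.mul_apply, Matrix.of_apply, hGdef]
    congr 1
    rw [Finset.sum_comm]
    refine Finset.sum_congr rfl fun l _ => ?_
    rw [Finset.sum_mul]
    rfl
  -- inverse identities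
  have hDirow : ∀ k : β, ∑ l : β, Di k l * (∑ j ∈ β, L ↑l j) = 1 := by
    intro k
    have h1 : (Di * D).mulVec (fun _ => (1:ℝ)) k = 1 := by
      rw [hDi, Matrix.nonsing_inv_mul D hDdet]
      simp [Matrix.one_mulVec]
    rw [← h1]
    simp only [Matrix.mulVec, dotProduct, Matrix.mul_apply, mul_one]
    rw [Finset.sum_comm]
    refine Finset.sum_congr rfl fun l _ => ?_
    rw [← Finset.sum_coe_sort β (fun j => L ↑l j), Finset.mul_sum]
    rfl
  have hDicol : ∀ l : β, ∑ k : β, (∑ i ∈ β, L i ↑k) * Di k l = 1 := by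
    intro l
    have h1 : Matrix.vecMul (fun _ => (1:ℝ)) (D * Di) l = 1 := by
      rw [hDi, Matrix.mul_nonsing_inv D hDdet]
      simp [Matrix.vecMul_one]
    rw [← h1]
    simp only [Matrix.vecMul, dotProduct, Matrix.mul_apply, one_mul]
    rw [Finset.sum_comm]
    refine Finset.sum_congr rfl fun k _ => ?_
    rw [← Finset.sum_coe_sort β (fun i => L i ↑k), Finset.sum_mul]
    rfl
  -- row sums of G over α vanish
  have hGrow : ∀ i, ∑ j ∈ α, G i j = 0 := by
    intro i
    have hsplit : ∀ l : Fin n, ∑ j ∈ α, L l j = -(∑ j ∈ β, L l j) := by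
      intro l
      have h := Finset.sum_add_sum_compl α (fun j => L l j)
      rw [hrowsum l, ← hβ] at h
      linarith
    have hswap : ∑ j ∈ α, (∑ k : β, ∑ l : β, L i ↑k * Di k l * L ↑l j)
        = ∑ k : β, ∑ l : β, (L i ↑k * Di k l * ∑ j ∈ α, L ↑l j) := by
      rw [Finset.sum_comm]
      refine Finset.sum_congr rfl fun k _ => ?_
      rw [Finset.sum_comm]
      refine Finset.sum_congr rfl fun l _ => ?_
      rw [Finset.mul_sum]
    have hcorr : ∑ k : β, ∑ l : β, (L i ↑k * Di k l * ∑ j ∈ α, L ↑l j)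
        = -(∑ k ∈ β, L i k) := by
      have hstep : ∀ k : β, ∑ l : β, (L i ↑k * Di k l * ∑ j ∈ α, L ↑l j)
          = -(L i ↑k * ∑ l : β, Di k l * (∑ j ∈ β, L ↑l j)) := by
        intro k
        rw [Finset.mul_sum, ← Finset.sum_neg_distrib]
        refine Finset.sum_congr rfl fun l _ => ?_
        rw [hsplit ↑l]; ring
      calc ∑ k : β, ∑ l : β, (L i ↑k * Di k l * ∑ j ∈ α, L ↑l j)
          = ∑ k : β, -(L i ↑k * ∑ l : β, Di k l * (∑ j ∈ β, L ↑l j)) :=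
            Finset.sum_congr rfl fun k _ => hstep k
        _ = -(∑ k ∈ β, L i k) := by
            simp only [hDirow, mul_one]
            rw [Finset.sum_neg_distrib, Finset.sum_coe_sort]
    simp only [hGdef, Finset.sum_sub_distrib]
    rw [hswap, hcorr, sub_neg_eq_add]
    have h := Finset.sum_add_sum_compl α (fun j => L i j)
    rw [hrowsum i, ← hβ] at h
    exact h
  -- column sums of G over α vanish
  have hGcol : ∀ j, ∑ i ∈ α, G i j = 0 := by
    intro j
    have hsplit : ∀ k : Fin n, ∑ i ∈ α, L i k = -(∑ i ∈ β, L i k) := by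
      intro k
      have h := Finset.sum_add_sum_compl α (fun i => L i k)
      rw [hcolsum k, ← hβ] at h
      linarith
    have hswap : ∑ i ∈ α, (∑ k : β, ∑ l : β, L i ↑k * Di k l * L ↑l j)
        = ∑ k : β, ∑ l : β, ((∑ i ∈ α, L i ↑k) * Di k l * L ↑l j) := by
      rw [Finset.sum_comm]
      refine Finset.sum_congr rfl fun k _ => ?_
      rw [Finset.sum_comm]
      refine Finset.sum_congr rfl fun l _ => ?_
      rw [Finset.sum_mul, Finset.sum_mul]
    have hcorr : ∑ k : β, ∑ l : β, ((∑ i ∈ α, L i ↑k) * Di k l * L ↑l j)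
        = -(∑ l ∈ β, L l j) := by
      have hswap2 : ∑ k : β, ∑ l : β, ((∑ i ∈ α, L i ↑k) * Di k l * L ↑l j)
          = ∑ l : β, -((∑ k : β, (∑ i ∈ β, L i ↑k) * Di k l) * L ↑l j) := by
        rw [Finset.sum_comm]
        refine Finset.sum_congr rfl fun l _ => ?_
        rw [Finset.sum_mul, ← Finset.sum_neg_distrib]
        refine Finset.sum_congr rfl fun k _ => ?_
        rw [hsplit ↑k]; ring
      rw [hswap2]
      simp only [hDicol, one_mul]
      rw [Finset.sum_neg_distrib]
      congr 1
      exact Finset.sum_coe_sort β (fun l => L l j)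
    simp only [hGdef, Finset.sum_sub_distrib]
    rw [hswap, hcorr, sub_neg_eq_add]
    have h := Finset.sum_add_sum_compl α (fun i => L i j)
    rw [hcolsum j, ← hβ] at h
    exact h
  -- assemble
  have row1 : G a a + G a b = 0 := by
    have h := hGrow a
    rwa [hα, Finset.sum_pair hab] at h
  have colb : G a b + G b b = 0 := by
    have h := hGcol b
    rwa [hα, Finset.sum_pair hab] at h
  calc schur L α ⟨a, Finset.mem_insert_self a {b}⟩ ⟨a, Finset.mem_insert_self a {b}⟩
      = G a a := hG a a ha ha
    _ = G b b := by linarith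
    _ = schur L α ⟨b, Finset.mem_insert_of_mem (Finset.mem_singleton_self b)⟩
        ⟨b, Finset.mem_insert_of_mem (Finset.mem_singleton_self b)⟩ := (hG b b hb hb).symm
end

section
/- Asymmetry reduces to node weights: let L be the loop-less Laplacian of a strongly connected directed graph, and suppose M = diag(m₁,…,m_n) with all m_i > 0 satisfies 1ᵀ(ML) = 0. Then for distinct a, b the effective conductance satisfies (L/L[{a,b}ᶜ,{a,b}ᶜ])_{aa} = (1/m_a)·((ML)/(ML)[{a,b}ᶜ,{a,b}ᶜ])_{aa}; equivalently R_G(a,b) = m_a · (e_a − e_b)ᵀ (ML)† (e_a − e_b). -/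
open Matrix Finset

lemma quad_eq {n : ℕ} (A : Matrix (Fin n) (Fin n) ℝ)
    (hrow : ∀ i, ∑ j, A i j = 0) (hcol : ∀ j, ∑ i, A i j = 0) (x : Fin n → ℝ) :
    2 * (x ⬝ᵥ A.mulVec x) = ∑ i, ∑ j, (-(A i j)) * (x i - x j)^2 := by
  have hQ : x ⬝ᵥ A.mulVec x = ∑ i, ∑ j, A i j * (x i * x j) := by
    simp only [dotProduct, Matrix.mulVec, Finset.mul_sum]
    exact Finset.sum_congr rfl fun i _ => Finset.sum_congr rfl fun j _ => by ring
  have h1 : ∑ i, ∑ j, A i j * (x i * x i) = 0 := by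
    refine Finset.sum_eq_zero fun i _ => ?_
    rw [← Finset.sum_mul, hrow i, zero_mul]
  have h2 : ∑ i, ∑ j, A i j * (x j * x j) = 0 := by
    rw [Finset.sum_comm]
    refine Finset.sum_eq_zero fun j _ => ?_
    rw [← Finset.sum_mul, hcol j, zero_mul]
  have key : ∀ i j : Fin n, (-(A i j)) * (x i - x j)^2
      = 2 * (A i j * (x i * x j)) - A i j * (x i * x i) - A i j * (x j * x j) := by
    intros; ring
  simp_rw [key, Finset.sum_sub_distrib]
  rw [h1, h2, hQ, Finset.mul_sum]
  simp [Finset.mul_sum]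

lemma quad_zero {n : ℕ} (A : Matrix (Fin n) (Fin n) ℝ)
    (hrow : ∀ i, ∑ j, A i j = 0) (hcol : ∀ j, ∑ i, A i j = 0)
    (hoff : ∀ i j, i ≠ j → A i j ≤ 0) (x : Fin n → ℝ)
    (hQ : x ⬝ᵥ A.mulVec x = 0) : ∀ i j, A i j < 0 → x i = x j := by
  have h := quad_eq A hrow hcol x
  rw [hQ, mul_zero] at h
  have hnn : ∀ i j : Fin n, 0 ≤ (-(A i j)) * (x i - x j)^2 := by
    intro i j
    rcases eq_or_ne i j with rfl | hij
    · simp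
    · exact mul_nonneg (by linarith [hoff i j hij]) (sq_nonneg _)
  have houter := (Finset.sum_eq_zero_iff_of_nonneg
    (fun i _ => Finset.sum_nonneg fun j _ => hnn i j)).mp h.symm
  intro i j hij
  have hterm := (Finset.sum_eq_zero_iff_of_nonneg (fun j _ => hnn i j)).mp
    (houter i (mem_univ i)) j (mem_univ j)
  have h2 : (x i - x j)^2 = 0 := by
    rcases mul_eq_zero.mp hterm with h | h
    · linarith
    · exact h
  have := pow_eq_zero_iff (n := 2) (by norm_num) |>.mp h2
  linarith [sub_eq_zero.mp this]

lemma schur_mulVec {n : ℕ} (A : Matrix (Fin n) (Fin n) ℝ) (α : Finset (Fin n))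
    (hB : IsUnit (subm A αᶜ αᶜ).det) (v f : Fin n → ℝ)
    (hf : ∀ i ∈ αᶜ, f i = 0) (hAv : A.mulVec v = f) (i : Fin n) (hi : i ∈ α) :
    (schur A α).mulVec (fun j : α => v j) ⟨i, hi⟩ = f i := by
  set B := subm A αᶜ αᶜ with hBdef
  set vα : ((α : Finset (Fin n)) : Type) → ℝ := fun j => v j with hvα
  set vc : ((αᶜ : Finset (Fin n)) : Type) → ℝ := fun j => v j with hvc
  have hsplit : ∀ k : Fin n,
      (∑ j : {x // x ∈ α}, A k j * v j) + (∑ j : {x // x ∈ αᶜ}, A k j * v j) = f k := by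
    intro k
    rw [Finset.sum_coe_sort α (fun j => A k j * v j),
        Finset.sum_coe_sort αᶜ (fun j => A k j * v j),
        Finset.sum_add_sum_compl α (fun j => A k j * v j), ← hAv]
    simp [Matrix.mulVec, dotProduct]
  have hc : B.mulVec vc = - (subm A αᶜ α).mulVec vα := by
    funext p
    have h0 := hsplit p
    rw [hf p p.2] at h0
    have e1 : B.mulVec vc p = ∑ j : {x // x ∈ αᶜ}, A p j * v j := rfl
    have e2 : (subm A αᶜ α).mulVec vα p = ∑ j : {x // x ∈ α}, A p j * v j := rfl
    rw [e1, Pi.neg_apply, e2]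
    linarith
  have hvc' : vc = - ((B⁻¹ * subm A αᶜ α).mulVec vα) := by
    calc vc = (B⁻¹ * B).mulVec vc := by rw [Matrix.nonsing_inv_mul B hB, Matrix.one_mulVec]
      _ = B⁻¹.mulVec (B.mulVec vc) := by rw [← Matrix.mulVec_mulVec]
      _ = B⁻¹.mulVec (- (subm A αᶜ α).mulVec vα) := by rw [hc]
      _ = - ((B⁻¹ * subm A αᶜ α).mulVec vα) := by
          rw [Matrix.mulVec_neg, Matrix.mulVec_mulVec]
  have e4 : (B⁻¹ * subm A αᶜ α).mulVec vα = -vc := by rw [hvc', neg_neg]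
  rw [schur, Matrix.sub_mulVec, Pi.sub_apply]
  have e3 : (subm A α αᶜ * B⁻¹ * subm A αᶜ α).mulVec vα
      = (subm A α αᶜ).mulVec ((B⁻¹ * subm A αᶜ α).mulVec vα) := by
    rw [Matrix.mulVec_mulVec, Matrix.mul_assoc]
  rw [e3, e4, Matrix.mulVec_neg]
  have h0 := hsplit i
  have e5 : (subm A α α).mulVec vα ⟨i, hi⟩ = ∑ j : {x // x ∈ α}, A i j * v j := rfl
  have e6 : (subm A α αᶜ).mulVec vc ⟨i, hi⟩ = ∑ j : {x // x ∈ αᶜ}, A i j * v j := rfl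
  rw [Pi.neg_apply, e5, e6]
  linarith

lemma sum_subtype_pair {n : ℕ} (a b : Fin n) (hab : a ≠ b)
    (ha : a ∈ ({a, b} : Finset (Fin n))) (hb : b ∈ ({a, b} : Finset (Fin n)))
    (g : (({a, b} : Finset (Fin n)) : Type) → ℝ) :
    ∑ j, g j = g ⟨a, ha⟩ + g ⟨b, hb⟩ := by
  classical
  let g' : Fin n → ℝ := fun j => if h : j ∈ ({a, b} : Finset (Fin n)) then g ⟨j, h⟩ else 0
  have h1 : ∀ j : (({a, b} : Finset (Fin n)) : Type), g j = g' ↑j := by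
    intro j
    simp only [g', dif_pos j.2]
  rw [Finset.sum_congr rfl (fun j _ => h1 j), Finset.sum_coe_sort _ g',
      Finset.sum_pair hab]
  simp only [g', dif_pos ha, dif_pos hb]

/-- Asymmetry of the effective resistance reduces to node weights: if `M = diag(m)` balances
`L`, then `C_G(a,b) = (1/mₐ) · C_{G_bal}(a,b)` and
`R_G(a,b) = mₐ · (eₐ - e_b)ᵀ (ML)† (eₐ - e_b)`. -/
theorem effective_resistance_asymmetry {n : ℕ} (L X : Matrix (Fin n) (Fin n) ℝ)
    (m : Fin n → ℝ) (hm : ∀ i, 0 < m i)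
    (hZ : ∀ i j, i ≠ j → L i j ≤ 0)
    (hrow : L.mulVec 1 = 0)
    (hconn : ∀ i j : Fin n, Relation.ReflTransGen (fun u v => L u v < 0) i j)
    (hbal : Matrix.vecMul 1 (Matrix.diagonal m * L) = 0)
    (hX : IsMoorePenrose (Matrix.diagonal m * L) X)
    (a b : Fin n) (hab : a ≠ b) :
    schur L {a, b} ⟨a, Finset.mem_insert_self a {b}⟩ ⟨a, Finset.mem_insert_self a {b}⟩
        = (1 / m a) * schur (Matrix.diagonal m * L) {a, b} ⟨a, Finset.mem_insert_self a {b}⟩ ⟨a, Finset.mem_insert_self a {b}⟩ ∧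
    1 / schur L {a, b} ⟨a, Finset.mem_insert_self a {b}⟩ ⟨a, Finset.mem_insert_self a {b}⟩
        = m a * ((Pi.single a 1 - Pi.single b 1) ⬝ᵥ
                  X.mulVec (Pi.single a 1 - Pi.single b 1)) := by
  classical
  obtain ⟨hX1, hX2, hX3, hX4⟩ := hX
  set A := Matrix.diagonal m * L with hA
  have ha : a ∈ ({a, b} : Finset (Fin n)) := Finset.mem_insert_self a {b}
  have hb : b ∈ ({a, b} : Finset (Fin n)) := by simp
  have hAe : ∀ i j, A i j = m i * L i j := fun i j => by
    rw [hA, Matrix.diagonal_mul]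
  have hArowV : A.mulVec 1 = 0 := by
    rw [hA, ← Matrix.mulVec_mulVec, hrow, Matrix.mulVec_zero]
  have hArow : ∀ i, ∑ j, A i j = 0 := by
    intro i
    have h := congrFun hArowV i
    simpa [Matrix.mulVec, dotProduct] using h
  have hAcol : ∀ j, ∑ i, A i j = 0 := by
    intro j
    have h := congrFun hbal j
    simpa [Matrix.vecMul, dotProduct] using h
  have hAoff : ∀ i j, i ≠ j → A i j ≤ 0 := fun i j hij => by
    rw [hAe]
    nlinarith [hm i, hZ i j hij]
  have hconst : ∀ x : Fin n → ℝ, x ⬝ᵥ A.mulVec x = 0 → ∀ i j, x i = x j := by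
    intro x hQ i j
    have hedge := quad_zero A hArow hAcol hAoff x hQ
    have hstep : ∀ u w : Fin n, L u w < 0 → x u = x w := fun u w h =>
      hedge u w (by rw [hAe]; exact mul_neg_of_pos_of_neg (hm u) h)
    have h := hconn i j
    induction h with
    | refl => rfl
    | tail _ h ih => exact ih.trans (hstep _ _ h)
  -- invertibility of the complement block
  have hBdet : IsUnit (subm A (({a, b} : Finset (Fin n)))ᶜ (({a, b} : Finset (Fin n)))ᶜ).det := by
    rw [isUnit_iff_ne_zero]
    intro hdet
    obtain ⟨y, hy0, hy⟩ := Matrix.exists_mulVec_eq_zero_iff.mpr hdet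
    set x : Fin n → ℝ :=
      fun i => if h : i ∈ (({a, b} : Finset (Fin n)))ᶜ then y ⟨i, h⟩ else 0 with hx
    have hxz : ∀ i ∉ (({a, b} : Finset (Fin n)))ᶜ, x i = 0 := fun i h => dif_neg h
    have inner : ∀ i : Fin n,
        (A.mulVec x) i = ∑ j : {z // z ∈ (({a, b} : Finset (Fin n)))ᶜ}, A i j * y j := by
      intro i
      have h1 : (A.mulVec x) i = ∑ j, A i j * x j := rfl
      rw [h1, ← Finset.sum_subset (Finset.subset_univ ((({a, b} : Finset (Fin n)))ᶜ))
        (fun j _ hj => by rw [hxz j hj, mul_zero]),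
        ← Finset.sum_coe_sort]
      refine Finset.sum_congr rfl fun j _ => ?_
      rw [hx]
      show A i ↑j * (if h : (↑j : Fin n) ∈ (({a, b} : Finset (Fin n)))ᶜ then y ⟨↑j, h⟩ else 0)
          = A i ↑j * y j
      rw [dif_pos j.2, Subtype.coe_eta]
    have hQ : x ⬝ᵥ A.mulVec x = 0 := by
      have h1 : x ⬝ᵥ A.mulVec x = ∑ i, x i * (A.mulVec x) i := rfl
      rw [h1, ← Finset.sum_subset (Finset.subset_univ ((({a, b} : Finset (Fin n)))ᶜ))
        (fun i _ hi => by rw [hxz i hi, zero_mul]),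
        ← Finset.sum_coe_sort]
      refine Finset.sum_eq_zero fun i _ => ?_
      have h2 : (A.mulVec x) ↑i = 0 := by
        rw [inner ↑i]
        have h3 := congrFun hy i
        simpa [subm, Matrix.mulVec, dotProduct] using h3
      rw [h2, mul_zero]
    have hx0 : ∀ i, x i = 0 := by
      intro i
      have h4 := hconst x hQ i a
      rw [h4]
      exact hxz a (by simp)
    refine hy0 (funext fun p => ?_)
    have h5 : (if h : (↑p : Fin n) ∈ (({a, b} : Finset (Fin n)))ᶜ then y ⟨↑p, h⟩ else 0) = 0 :=
      hx0 ↑p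
    rwa [dif_pos p.2, Subtype.coe_eta] at h5
  -- diagonal factorization
  have hsub : ∀ s t : Finset (Fin n), subm A s t
      = Matrix.diagonal (fun i : (s : Type) => m i) * subm L s t := by
    intro s t
    funext i j
    rw [Matrix.diagonal_mul]
    exact hAe i j
  have hDcdet : IsUnit (Matrix.diagonal
      (fun i : (((({a, b} : Finset (Fin n)))ᶜ : Finset (Fin n)) : Type) => m i)).det := by
    rw [Matrix.det_diagonal, isUnit_iff_ne_zero]
    exact Finset.prod_ne_zero_iff.mpr fun i _ => (hm i).ne'
  have hschurAL : schur A {a, b}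
      = Matrix.diagonal (fun i : (({a, b} : Finset (Fin n)) : Type) => m i) * schur L {a, b} := by
    rw [schur, schur, hsub, hsub, hsub, hsub, Matrix.mul_inv_rev, Matrix.mul_sub]
    congr 1
    simp only [Matrix.mul_assoc]
    congr 2
    congr 1
    rw [Matrix.nonsing_inv_mul_cancel_left _ _ hDcdet]
  have g1 : schur L {a, b} ⟨a, ha⟩ ⟨a, ha⟩
      = (1 / m a) * schur A {a, b} ⟨a, ha⟩ ⟨a, ha⟩ := by
    rw [hschurAL, Matrix.diagonal_mul, ← mul_assoc, one_div_mul_cancel (hm a).ne', one_mul]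
  refine ⟨g1, ?_⟩
  -- pseudoinverse solve
  set f : Fin n → ℝ := Pi.single a 1 - Pi.single b 1 with hfdef
  set v : Fin n → ℝ := X.mulVec f with hv
  have hAtP : Aᵀ * (A * X) = Aᵀ := by
    conv_lhs => rw [← hX3]
    rw [← Matrix.transpose_mul, Matrix.mul_assoc, ← Matrix.mul_assoc, hX1]
  have hsolve : A.mulVec v = f := by
    set z : Fin n → ℝ := f - A.mulVec v with hz
    have hz1 : Aᵀ.mulVec z = 0 := by
      rw [hz, Matrix.mulVec_sub, hv, Matrix.mulVec_mulVec, Matrix.mulVec_mulVec,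
        Matrix.mul_assoc, hAtP, sub_self]
    have hzc := hconst z (by
      rw [Matrix.dotProduct_mulVec, ← Matrix.mulVec_transpose, hz1, zero_dotProduct])
    have hfsum : ∑ i, f i = 0 := by
      rw [hfdef]
      simp [Finset.sum_sub_distrib]
    have hzsum : ∑ i, z i = 0 := by
      have h2 : ∑ i, (A.mulVec v) i = 0 := by
        have h3 : (1 : Fin n → ℝ) ⬝ᵥ (A.mulVec v) = 0 := by
          rw [Matrix.dotProduct_mulVec, hbal, zero_dotProduct]
        simpa [dotProduct] using h3
      rw [hz]
      simp [Finset.sum_sub_distrib, hfsum, h2]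
    have hz0 : ∀ i, z i = 0 := by
      intro i
      have h3 : ∑ j : Fin n, z j = ∑ _j : Fin n, z i :=
        Finset.sum_congr rfl fun j _ => hzc j i
      rw [hzsum] at h3
      simp only [Finset.sum_const, card_univ, Fintype.card_fin, nsmul_eq_mul] at h3
      have hn : (0 : ℝ) < n := by exact_mod_cast a.pos
      have := h3.symm
      rcases mul_eq_zero.mp this with h | h
      · linarith
      · exact h
    have h4 : f - A.mulVec v = 0 := by rw [← hz]; exact funext hz0
    have := sub_eq_zero.mp h4
    exact this.symm
  have hf0 : ∀ i ∈ (({a, b} : Finset (Fin n)))ᶜ, f i = 0 := by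
    intro i hi
    rw [Finset.mem_compl, Finset.mem_insert, Finset.mem_singleton] at hi
    push_neg at hi
    rw [hfdef]
    simp [Pi.single_eq_of_ne hi.1, Pi.single_eq_of_ne hi.2]
  have hSa := schur_mulVec A {a, b} hBdet v f hf0 hsolve a ha
  have hS1 := schur_mulVec A {a, b} hBdet 1 0 (fun _ _ => rfl) hArowV a ha
  have expand : ∀ w : Fin n → ℝ,
      (schur A ({a, b} : Finset (Fin n))).mulVec (fun j => w ↑j) ⟨a, ha⟩
      = schur A {a, b} ⟨a, ha⟩ ⟨a, ha⟩ * w a + schur A {a, b} ⟨a, ha⟩ ⟨b, hb⟩ * w b := by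
    intro w
    have h1 : (schur A ({a, b} : Finset (Fin n))).mulVec (fun j => w ↑j) ⟨a, ha⟩
        = ∑ j : (({a, b} : Finset (Fin n)) : Type), schur A {a, b} ⟨a, ha⟩ j * w ↑j := rfl
    rw [h1, sum_subtype_pair a b hab ha hb]
  rw [expand v] at hSa
  rw [expand 1] at hS1
  have hfa : f a = 1 := by
    rw [hfdef]
    simp [Pi.single_eq_of_ne hab]
  rw [hfa] at hSa
  simp only [Pi.one_apply, mul_one, Pi.zero_apply] at hS1
  set saa := schur A {a, b} ⟨a, ha⟩ ⟨a, ha⟩ with hsaa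
  set sab := schur A {a, b} ⟨a, ha⟩ ⟨b, hb⟩ with hsab
  have key : saa * (v a - v b) = 1 := by linear_combination hSa - v b * hS1
  have hsne : saa ≠ 0 := by
    intro h
    rw [h, zero_mul] at key
    exact one_ne_zero key.symm
  have hfv : f ⬝ᵥ v = v a - v b := by
    rw [hfdef]
    simp [sub_dotProduct]
  rw [g1, hfv]
  have hma := (hm a).ne'
  have hv2 : v a - v b = 1 / saa := by
    field_simp
    linear_combination key
  rw [hv2]
  field_simp
end
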